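/- arXiv:2106.14414 — 14 statements merged into one kernel-verified Lean document; each statement's English description precedes it below -/
import Mathlib

section
/- Let (L, τ) be a locally solid Riesz space, I an admissible ideal on ℕ, (t_n) a weighted sequence of real numbers, x = (x_n) a sequence in L, and V a τ-neighborhood of zero. If V is a convex set, then the rough weighted I_τ-limit set WI_τ-LIM^V x is a convex subset of L. -/
open Topology Filter Set Pointwise

/-- An admissible ideal on ℕ: contains all finite sets, closed under subsets
and finite unions, and does not contain ℕ itself. -/
def IsAdmissibleIdeal (I : Set (Set ℕ)) : Prop :=
  (∀ A : Set ℕ, A.Finite → A ∈ I) ∧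
  (∀ A B : Set ℕ, A ∈ I → B ⊆ A → B ∈ I) ∧
  (∀ A B : Set ℕ, A ∈ I → B ∈ I → A ∪ B ∈ I) ∧
  (Set.univ : Set ℕ) ∉ I

/-- A set `S` in a lattice-ordered group is solid if `|a| ≤ |b|` and `b ∈ S` imply `a ∈ S`,
where `|a| = a ⊔ -a`. -/
def IsSolidSet {L : Type*} [Lattice L] [AddCommGroup L] (S : Set L) : Prop :=
  ∀ a b : L, a ⊔ -a ≤ b ⊔ -b → b ∈ S → a ∈ S

/-- The rough weighted `I`-τ-limit set of the sequence `x`, with weights `t` and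
degree of roughness the neighborhood `V` of zero. -/
def WLimSet {L : Type*} [AddCommGroup L] [Module ℝ L] [TopologicalSpace L]
    (I : Set (Set ℕ)) (t : ℕ → ℝ) (x : ℕ → L) (V : Set L) : Set L :=
  {x' | ∀ U ∈ 𝓝 (0 : L), {n : ℕ | t n • (x n - x') ∉ V + U} ∈ I}

/-- The set of weighted `I`-τ-cluster points of the sequence `x` with weights `t`. -/
def WClusterSet {L : Type*} [AddCommGroup L] [Module ℝ L] [TopologicalSpace L]
    (I : Set (Set ℕ)) (t : ℕ → ℝ) (x : ℕ → L) : Set L :=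
  {c | ∀ U ∈ 𝓝 (0 : L), {n : ℕ | t n • (x n - c) ∈ U} ∉ I}

/-! If `t n • (x n - y)` and `t n • (x n - z)` both lie in `V + W`, then, since `a + b = 1`,
`t n • (x n - (a • y + b • z))` is their convex combination with weights `a, b`, so it lies in
`a • V + b • V + (a • W + b • W) ⊆ V + U` when `V` is convex and `W` is a balanced neighbourhood
of zero with `W + W ⊆ U`. Hence the exceptional set of `a • y + b • z` for `U` is covered by the
exceptional sets of `y` and `z` for `W`. -/

theorem IsAdmissibleIdeal.mem_of_subset_union {I : Set (Set ℕ)} (hI : IsAdmissibleIdeal I)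
    {A B C : Set ℕ} (hA : A ∈ I) (hB : B ∈ I) (hC : C ⊆ A ∪ B) : C ∈ I :=
  hI.2.1 _ _ (hI.2.2.1 _ _ hA hB) hC

theorem smul_sub_combo {R E : Type*} [CommRing R] [AddCommGroup E] [Module R E] {a b : R}
    (hab : a + b = 1) (c : R) (x y z : E) :
    c • (x - (a • y + b • z)) = a • (c • (x - y)) + b • (c • (x - z)) := by
  linear_combination (norm := module) -hab • c • x

theorem Convex.combo_add_subset {𝕜 E : Type*} [Semiring 𝕜] [PartialOrder 𝕜] [AddCommMonoid E]
    [Module 𝕜 E] {V : Set E} (hV : Convex 𝕜 V) (W : Set E) {a b : 𝕜} (ha : 0 ≤ a) (hb : 0 ≤ b)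
    (hab : a + b = 1) : a • (V + W) + b • (V + W) ⊆ V + (a • W + b • W) := by
  rw [smul_add, smul_add, add_add_add_comm]
  exact add_subset_add_right (hV.set_combo_subset ha hb hab)

theorem exists_nhds_zero_combo_subset {E : Type*} [AddCommGroup E] [Module ℝ E]
    [TopologicalSpace E] [IsTopologicalAddGroup E] [ContinuousSMul ℝ E] {U : Set E}
    (hU : U ∈ 𝓝 (0 : E)) :
    ∃ W ∈ 𝓝 (0 : E), ∀ ⦃a b : ℝ⦄, 0 ≤ a → 0 ≤ b → a + b = 1 → a • W + b • W ⊆ U := by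
  obtain ⟨U', hU', hU'U⟩ := exists_nhds_zero_half hU
  refine ⟨balancedCore ℝ U', balancedCore_mem_nhds_zero hU', fun a b ha hb hab => ?_⟩
  have hscale : ∀ c : ℝ, 0 ≤ c → c ≤ 1 → c • balancedCore ℝ U' ⊆ U' := fun c hc0 hc1 =>
    ((balancedCore_balanced U') c (by rwa [Real.norm_of_nonneg hc0])).trans
      (balancedCore_subset U')
  rintro _ ⟨v, hv, w, hw, rfl⟩
  exact hU'U v (hscale a ha (by linarith) hv) w (hscale b hb (by linarith) hw)

theorem convex_WLimSet_of_convex_general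
    {L : Type*} [AddCommGroup L] [Module ℝ L]
    [TopologicalSpace L] [IsTopologicalAddGroup L] [ContinuousSMul ℝ L]
    {I : Set (Set ℕ)} (hI : IsAdmissibleIdeal I)
    {t : ℕ → ℝ}
    (x : ℕ → L) {V : Set L} (hVconv : Convex ℝ V) :
    Convex ℝ (WLimSet I t x V) := by
  intro y hy z hz a b ha hb hab U hU
  obtain ⟨W, hW, hWU⟩ := exists_nhds_zero_combo_subset hU
  refine hI.mem_of_subset_union (hy W hW) (hz W hW) fun n hn => ?_
  by_contra hny
  simp only [mem_union, mem_ofPred_eq, not_or, not_not] at hny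
  apply hn
  rw [smul_sub_combo hab]
  exact add_subset_add_left (hWU ha hb hab) <| hVconv.combo_add_subset W ha hb hab <|
    add_mem_add (smul_mem_smul_set hny.1) (smul_mem_smul_set hny.2)

/-- In a locally solid Riesz space, if the degree of roughness `V`
(a neighborhood of zero) is convex, then the rough weighted `I`-τ-limit set is convex. -/
theorem convex_WLimSet_of_convex
    {L : Type*} [AddCommGroup L] [Lattice L] [Module ℝ L]
    [CovariantClass L L (· + ·) (· ≤ ·)] [PosSMulMono ℝ L]
    [TopologicalSpace L] [IsTopologicalAddGroup L] [ContinuousSMul ℝ L]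
    (hsolid : ∀ U ∈ 𝓝 (0 : L), ∃ W ∈ 𝓝 (0 : L), W ⊆ U ∧ IsSolidSet W)
    {I : Set (Set ℕ)} (hI : IsAdmissibleIdeal I)
    {t : ℕ → ℝ} (ht : ∃ δ : ℝ, 0 < δ ∧ ∀ n, δ < t n)
    (x : ℕ → L) {V : Set L} (hV : V ∈ 𝓝 (0 : L)) (hVconv : Convex ℝ V) :
    Convex ℝ (WLimSet I t x V) :=
  convex_WLimSet_of_convex_general hI x hVconv
end

section
/- Let (L, τ) be a Hausdorff locally solid Riesz space, I an admissible ideal on ℕ, (t_n) a weighted sequence of real numbers, x = (x_n) a sequence in L, and V a τ-bounded τ-neighborhood of zero. If the weighted sequence (t_n) is not I-bounded, then the rough weighted I_τ-limit set WI_τ-LIM^V x contains at most one element. -/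
open Topology Filter Set Pointwise

/-! Since `V` is bounded, so is `B = (V + V) - (V + V)`. For two rough limits `y` and `z`, the
indices `n` with `t n • (x n - y) ∉ V + V` or `t n • (x n - z) ∉ V + V` form a set in the
ideal, whereas `{n | M ≤ t n}` is not in the ideal for any `M > 0`. Hence for arbitrarily large
weights `t n` we get `t n • (y - z) = t n • (x n - z) - t n • (x n - y) ∈ B`; since `B` is
absorbed by every neighbourhood of zero, `y - z` lies in all of them, and `y = z` as the space
is Hausdorff. -/

theorem IsAdmissibleIdeal.not_subset_union {I : Set (Set ℕ)} (hI : IsAdmissibleIdeal I)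
    {A B C : Set ℕ} (hA : A ∈ I) (hB : B ∈ I) (hC : C ∉ I) : ¬ C ⊆ A ∪ B :=
  fun hCAB ↦ hC (hI.2.1 _ _ (hI.2.2.1 _ _ hA hB) hCAB)

namespace Bornology

variable {𝕜 E : Type*} [NontriviallyNormedField 𝕜] [AddCommGroup E] [Module 𝕜 E]
  [TopologicalSpace E]

theorem isVonNBounded_of_forall_subset_smul [ContinuousSMul 𝕜 E] {V : Set E}
    (hV : ∀ U ∈ 𝓝 (0 : E), ∃ c : 𝕜, V ⊆ c • U) : IsVonNBounded 𝕜 V := by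
  rw [(nhds_basis_balanced 𝕜 E).isVonNBounded_iff]
  rintro U ⟨hU, hUbal⟩
  obtain ⟨c, hVc⟩ := hV U hU
  exact absorbs_iff_norm.2 ⟨‖c‖, fun a ha ↦ hVc.trans (hUbal.smul_mono ha)⟩

theorem IsVonNBounded.exists_pos_mem_of_smul_mem {B N : Set E} (hB : IsVonNBounded 𝕜 B)
    (hN : N ∈ 𝓝 (0 : E)) : ∃ M > 0, ∀ (c : 𝕜) (d : E), M ≤ ‖c‖ → c • d ∈ B → d ∈ N := by
  obtain ⟨M, hM, hMB⟩ := (hB hN).exists_pos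
  refine ⟨M, hM, fun c d hc hcd ↦ ?_⟩
  have hc0 : c ≠ 0 := norm_pos_iff.1 (hM.trans_le hc)
  exact (smul_mem_smul_set_iff₀ hc0 N d).1 (hMB c hc hcd)

end Bornology

theorem WLimSet_subsingleton_of_not_Ibounded_general
    {L : Type*} [AddCommGroup L] [Module ℝ L]
    [TopologicalSpace L] [IsTopologicalAddGroup L] [ContinuousSMul ℝ L] [T2Space L]
    {I : Set (Set ℕ)} (hI : IsAdmissibleIdeal I)
    {t : ℕ → ℝ}
    (htI : ¬ ∃ M : ℝ, 0 < M ∧ {n : ℕ | M ≤ t n} ∈ I)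
    (x : ℕ → L) {V : Set L} (hV : V ∈ 𝓝 (0 : L))
    (hVbdd : ∀ U ∈ 𝓝 (0 : L), ∃ lam : ℝ, 0 < lam ∧ V ⊆ lam • U) :
    (WLimSet I t x V).Subsingleton := by
  intro y hy z hz
  have hVB : Bornology.IsVonNBounded ℝ V :=
    Bornology.isVonNBounded_of_forall_subset_smul fun U hU ↦ (hVbdd U hU).imp fun _ h ↦ h.2
  have hB : Bornology.IsVonNBounded ℝ ((V + V) - (V + V)) := (hVB.add hVB).sub (hVB.add hVB)
  suffices h : ∀ N ∈ 𝓝 (0 : L), y - z ∈ N from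
    sub_eq_zero.1 (specializes_iff_pure.2 fun N hN ↦ h N hN).eq
  intro N hN
  obtain ⟨M, hM, hMN⟩ := hB.exists_pos_mem_of_smul_mem hN
  obtain ⟨n, hMn, hn⟩ := not_subset.1 <|
    hI.not_subset_union (hy V hV) (hz V hV) fun hMI ↦ htI ⟨M, hM, hMI⟩
  simp only [mem_union, mem_ofPred_eq, not_or, not_not] at hMn hn
  have hyz : t n • (y - z) = t n • (x n - z) - t n • (x n - y) := by
    rw [← smul_sub, sub_sub_sub_cancel_left]
  refine hMN (t n) (y - z) ?_ (hyz ▸ sub_mem_sub hn.2 hn.1)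
  rwa [Real.norm_of_nonneg (hM.le.trans hMn)]

/-- In a Hausdorff locally solid Riesz space, if the weighted sequence `t`
is not `I`-bounded and the neighborhood `V` of zero is τ-bounded, then the rough weighted
`I`-τ-limit set contains at most one element. -/
theorem WLimSet_subsingleton_of_not_Ibounded
    {L : Type*} [AddCommGroup L] [Lattice L] [Module ℝ L]
    [CovariantClass L L (· + ·) (· ≤ ·)] [PosSMulMono ℝ L]
    [TopologicalSpace L] [IsTopologicalAddGroup L] [ContinuousSMul ℝ L] [T2Space L]
    (hsolid : ∀ U ∈ 𝓝 (0 : L), ∃ W ∈ 𝓝 (0 : L), W ⊆ U ∧ IsSolidSet W)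
    {I : Set (Set ℕ)} (hI : IsAdmissibleIdeal I)
    {t : ℕ → ℝ} (ht : ∃ δ : ℝ, 0 < δ ∧ ∀ n, δ < t n)
    (htI : ¬ ∃ M : ℝ, 0 < M ∧ {n : ℕ | M ≤ t n} ∈ I)
    (x : ℕ → L) {V : Set L} (hV : V ∈ 𝓝 (0 : L))
    (hVbdd : ∀ U ∈ 𝓝 (0 : L), ∃ lam : ℝ, 0 < lam ∧ V ⊆ lam • U) :
    (WLimSet I t x V).Subsingleton :=
  WLimSet_subsingleton_of_not_Ibounded_general hI htI x hV hVbdd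
end

section
/- Let (L, τ) be a Hausdorff locally solid Riesz space, I an admissible ideal on ℕ, (t_n) a weighted sequence of real numbers, and x = (x_n) a sequence in L. Let V be a solid τ-neighborhood of zero such that V + V + U is again a solid τ-neighborhood of zero for every solid τ-neighborhood U of zero. Then for all x*, y* ∈ WI_τ-LIM^V x one has (inf_{n∈ℕ} t_n) · (x* − y*) ∈ closure(V + V); equivalently x* − y* lies in (1/inf_{n} t_n) · closure(V + V). -/
/-!
Fix a neighbourhood `U` of zero, a solid neighbourhood `W₀ ⊆ U` and a neighbourhood `W` with
`W - W ⊆ W₀`. As `I` is a proper ideal closed under unions, some index `n` lies outside both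
exceptional sets, so `t n • (x n - x*)` and `t n • (x n - y*)` both lie in `V + W`; subtracting,
`t n • (x* - y*) ∈ V - V + (W - W) ⊆ V + V + W₀`, because solid sets are symmetric. Since
`0 ≤ inf t ≤ t n` and `V + V + W₀` is solid, the scalar can be lowered to `inf t`. Thus
`(inf t) • (x* - y*) ∈ V + V + U` for every neighbourhood `U` of zero, i.e. it lies in the
closure of `V + V`.
-/

open Topology Filter Set Pointwise

lemma IsAdmissibleIdeal.exists_notMem_and_notMem {I : Set (Set ℕ)} (hI : IsAdmissibleIdeal I)
    {A B : Set ℕ} (hA : A ∈ I) (hB : B ∈ I) : ∃ n, n ∉ A ∧ n ∉ B := by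
  by_contra! h
  have hAB : A ∪ B = univ := eq_univ_of_forall fun n ↦ (em (n ∈ A)).imp_right (h n)
  exact hI.2.2.2 (hAB ▸ hI.2.2.1 A B hA hB)

lemma exists_nhds_zero_sub_subset {G : Type*} [TopologicalSpace G] [AddGroup G]
    [IsTopologicalAddGroup G] {U : Set G} (hU : U ∈ 𝓝 0) : ∃ W ∈ 𝓝 0, W - W ⊆ U := by
  have hsub : Tendsto (fun p : G × G ↦ p.1 - p.2) (𝓝 0 ×ˢ 𝓝 0) (𝓝 0) := by
    simpa [nhds_prod_eq] using continuous_sub.tendsto ((0, 0) : G × G)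
  obtain ⟨W, hW, hWW⟩ := mem_prod_self_iff.1 (hsub hU)
  exact ⟨W, hW, sub_subset_iff.2 fun a ha b hb ↦ hWW (mk_mem_prod ha hb)⟩

lemma mem_closure_of_forall_mem_add_nhds_zero {G : Type*} [TopologicalSpace G] [AddCommGroup G]
    [IsTopologicalAddGroup G] {s : Set G} {x : G} (h : ∀ U ∈ 𝓝 (0 : G), x ∈ s + U) :
    x ∈ closure s := by
  refine mem_closure_iff_nhds_zero.2 fun U hU ↦ ?_
  obtain ⟨y, hy, u, hu, rfl⟩ := h (-U) (neg_mem_nhds_zero G hU)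
  exact ⟨y, hy, by rwa [sub_add_cancel_left, ← Set.mem_neg]⟩

section Solid

variable {L : Type*} [AddCommGroup L] [Lattice L] {S : Set L}

lemma IsSolidSet.neg_mem_iff (hS : IsSolidSet S) {a : L} : -a ∈ S ↔ a ∈ S :=
  ⟨hS a (-a) (abs_neg a).ge, hS (-a) a (abs_neg a).le⟩

lemma IsSolidSet.neg_eq (hS : IsSolidSet S) : -S = S :=
  Set.ext fun _ ↦ hS.neg_mem_iff

end Solid

section RieszSpace

variable {𝕜 L : Type*} [Field 𝕜] [LinearOrder 𝕜] [IsStrictOrderedRing 𝕜]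
  [AddCommGroup L] [Lattice L] [IsOrderedAddMonoid L] [Module 𝕜 L] [PosSMulMono 𝕜 L]

lemma abs_smul_of_nonneg {c : 𝕜} (hc : 0 ≤ c) (z : L) : |c • z| = c • |z| := by
  rcases hc.eq_or_lt with rfl | hc
  · simp
  · rw [abs, abs, ← smul_neg]
    exact ((OrderIso.smulRight hc).map_sup z (-z)).symm

lemma abs_smul_le_abs_smul {m c : 𝕜} (hm : 0 ≤ m) (hmc : m ≤ c) (z : L) :
    |m • z| ≤ |c • z| := by
  rw [abs_smul_of_nonneg hm, abs_smul_of_nonneg (hm.trans hmc)]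
  exact smul_le_smul_of_nonneg_right hmc (abs_nonneg z)

lemma IsSolidSet.smul_mem_of_le {S : Set L} (hS : IsSolidSet S) {m c : 𝕜} (hm : 0 ≤ m)
    (hmc : m ≤ c) {z : L} (hz : c • z ∈ S) : m • z ∈ S :=
  hS _ _ (abs_smul_le_abs_smul hm hmc z) hz

end RieszSpace

lemma exists_smul_sub_mem_of_mem_WLimSet {L : Type*} [AddCommGroup L] [Module ℝ L]
    [TopologicalSpace L] {I : Set (Set ℕ)} (hI : IsAdmissibleIdeal I) {t : ℕ → ℝ}
    {x : ℕ → L} {V W : Set L} {xs ys : L} (hxs : xs ∈ WLimSet I t x V)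
    (hys : ys ∈ WLimSet I t x V) (hW : W ∈ 𝓝 0) : ∃ n, t n • (xs - ys) ∈ V - V + (W - W) := by
  obtain ⟨n, hn₁, hn₂⟩ := hI.exists_notMem_and_notMem (hxs W hW) (hys W hW)
  simp only [mem_ofPred_eq, not_not] at hn₁ hn₂
  obtain ⟨v₁, hv₁, w₁, hw₁, h₁⟩ := mem_add.1 hn₁
  obtain ⟨v₂, hv₂, w₂, hw₂, h₂⟩ := mem_add.1 hn₂
  have hdiff : t n • (xs - ys) = v₂ - v₁ + (w₂ - w₁) :=
    calc t n • (xs - ys) = t n • (x n - ys) - t n • (x n - xs) := by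
          rw [← smul_sub, sub_sub_sub_cancel_left]
      _ = v₂ - v₁ + (w₂ - w₁) := by rw [← h₁, ← h₂]; abel
  exact ⟨n, hdiff ▸ Set.add_mem_add (sub_mem_sub hv₂ hv₁) (sub_mem_sub hw₂ hw₁)⟩

theorem WLimSet_diff_mem_closure_general
    {L : Type*} [AddCommGroup L] [Lattice L] [Module ℝ L]
    [CovariantClass L L (· + ·) (· ≤ ·)] [PosSMulMono ℝ L]
    [TopologicalSpace L] [IsTopologicalAddGroup L]
    (hsolid : ∀ U ∈ 𝓝 (0 : L), ∃ W ∈ 𝓝 (0 : L), W ⊆ U ∧ IsSolidSet W)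
    {I : Set (Set ℕ)} (hI : IsAdmissibleIdeal I)
    {t : ℕ → ℝ} (ht : ∃ δ : ℝ, 0 < δ ∧ ∀ n, δ < t n)
    (x : ℕ → L) {V : Set L} (hVsolid : IsSolidSet V)
    (hVVU : ∀ U ∈ 𝓝 (0 : L), IsSolidSet U →
      (V + V + U ∈ 𝓝 (0 : L) ∧ IsSolidSet (V + V + U))) :
    ∀ xs ∈ WLimSet I t x V, ∀ ys ∈ WLimSet I t x V,
      (⨅ n : ℕ, t n) • (xs - ys) ∈ closure (V + V) := by
  have : IsOrderedAddMonoid L :=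
    ⟨fun _ _ h c ↦ add_le_add_left h c, fun _ _ h c ↦ add_le_add_right h c⟩
  obtain ⟨δ, hδ, hδt⟩ := ht
  intro xs hxs ys hys
  have hbdd : BddBelow (range t) := ⟨δ, forall_mem_range.2 fun n ↦ (hδt n).le⟩
  have hinf : 0 ≤ ⨅ n, t n := hδ.le.trans (le_ciInf fun n ↦ (hδt n).le)
  refine mem_closure_of_forall_mem_add_nhds_zero fun U hU ↦ ?_
  obtain ⟨W₀, hW₀, hW₀U, hW₀solid⟩ := hsolid U hU
  obtain ⟨W, hW, hWW₀⟩ := exists_nhds_zero_sub_subset hW₀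
  obtain ⟨n, hn⟩ := exists_smul_sub_mem_of_mem_WLimSet hI hxs hys hW
  rw [sub_eq_add_neg V V, hVsolid.neg_eq] at hn
  have hn₀ : t n • (xs - ys) ∈ V + V + W₀ := add_subset_add_left hWW₀ hn
  exact add_subset_add_left hW₀U <|
    (hVVU W₀ hW₀ hW₀solid).2.smul_mem_of_le hinf (ciInf_le hbdd n) hn₀

/-- In a Hausdorff locally solid Riesz space, if `V` is a solid neighborhood
of zero such that `V + V + U` is a solid neighborhood of zero for every solid neighborhood
`U` of zero, then any two rough weighted `I`-τ-limit points `x*`, `y*` of `x` satisfy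
`(⨅ n, t n) • (x* - y*) ∈ closure (V + V)`. -/
theorem WLimSet_diff_mem_closure
    {L : Type*} [AddCommGroup L] [Lattice L] [Module ℝ L]
    [CovariantClass L L (· + ·) (· ≤ ·)] [PosSMulMono ℝ L]
    [TopologicalSpace L] [IsTopologicalAddGroup L] [ContinuousSMul ℝ L] [T2Space L]
    (hsolid : ∀ U ∈ 𝓝 (0 : L), ∃ W ∈ 𝓝 (0 : L), W ⊆ U ∧ IsSolidSet W)
    {I : Set (Set ℕ)} (hI : IsAdmissibleIdeal I)
    {t : ℕ → ℝ} (ht : ∃ δ : ℝ, 0 < δ ∧ ∀ n, δ < t n)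
    (x : ℕ → L) {V : Set L} (hV : V ∈ 𝓝 (0 : L)) (hVsolid : IsSolidSet V)
    (hVVU : ∀ U ∈ 𝓝 (0 : L), IsSolidSet U →
      (V + V + U ∈ 𝓝 (0 : L) ∧ IsSolidSet (V + V + U))) :
    ∀ xs ∈ WLimSet I t x V, ∀ ys ∈ WLimSet I t x V,
      (⨅ n : ℕ, t n) • (xs - ys) ∈ closure (V + V) :=
  WLimSet_diff_mem_closure_general hsolid hI ht x hVsolid hVVU
end

section
/- Let (L, τ) be a locally solid Riesz space whose topology is first countable, I an admissible ideal on ℕ, (t_n) a weighted sequence of real numbers, x = (x_n) a sequence in L, and V any τ-neighborhood of zero. If the weighted sequence (t_n) is I-bounded, then the rough weighted I_τ-limit set WI_τ-LIM^V x is a closed subset of L. -/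
open Topology Filter Set Pointwise

/-!
If `y` is a limit point of the rough limit set, pick `x'` in the limit set with
`M • (x' - y)` in a small solid neighborhood `W` of zero. Off the `I`-small set where
`t n ≥ M`, the weight satisfies `0 < t n < M`, so by solidity `t n • (x' - y)` also lies in `W`;
hence `t n • (x n - y)` misses `V + U` only where `t n • (x n - x')` misses `V + W`, or
where `t n ≥ M`. Both index sets lie in `I`.
-/

section Solid

variable {L : Type*} [AddCommGroup L] [Lattice L] [Module ℝ L]
  [CovariantClass L L (· + ·) (· ≤ ·)] [PosSMulMono ℝ L]

lemma abs_smul_le_abs {s : ℝ} (hs₀ : 0 ≤ s) (hs₁ : s ≤ 1) (w : L) : |s • w| ≤ |w| := by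
  have hsw : s • |w| ≤ |w| :=
    calc s • |w| ≤ s • |w| + (1 - s) • |w| :=
          le_add_of_nonneg_right (smul_nonneg (by linarith) (abs_nonneg w))
      _ = |w| := by rw [← add_smul, add_sub_cancel, one_smul]
  refine sup_le ?_ ?_
  · exact (smul_le_smul_of_nonneg_left (le_abs_self w) hs₀).trans hsw
  · rw [← smul_neg]
    exact (smul_le_smul_of_nonneg_left (neg_le_abs w) hs₀).trans hsw

lemma IsSolidSet.smul_mem {W : Set L} (hW : IsSolidSet W) {w : L} (hw : w ∈ W)
    {s : ℝ} (hs₀ : 0 ≤ s) (hs₁ : s ≤ 1) : s • w ∈ W :=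
  hW _ w (abs_smul_le_abs hs₀ hs₁ w) hw

lemma IsSolidSet.smul_sub_mem_add {W : Set L} (hW : IsSolidSet W) {M s : ℝ} (hM : 0 < M)
    (hs₀ : 0 ≤ s) (hsM : s ≤ M) {x' y z : L} (hy : M • (x' - y) ∈ W) {A : Set L}
    (hz : s • (z - x') ∈ A) : s • (z - y) ∈ A + W := by
  have hs : (s / M) • (M • (x' - y)) ∈ W :=
    hW.smul_mem hy (div_nonneg hs₀ hM.le) ((div_le_one hM).mpr hsM)
  rw [smul_smul, div_mul_cancel₀ _ hM.ne'] at hs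
  simpa only [← smul_add, sub_add_sub_cancel] using add_mem_add hz hs

end Solid

theorem WLimSet_isClosed_of_Ibounded_general
    {L : Type*} [AddCommGroup L] [Lattice L] [Module ℝ L]
    [CovariantClass L L (· + ·) (· ≤ ·)] [PosSMulMono ℝ L]
    [TopologicalSpace L] [IsTopologicalAddGroup L] [ContinuousSMul ℝ L]
    (hsolid : ∀ U ∈ 𝓝 (0 : L), ∃ W ∈ 𝓝 (0 : L), W ⊆ U ∧ IsSolidSet W)
    {I : Set (Set ℕ)} (hI : IsAdmissibleIdeal I)
    {t : ℕ → ℝ} (ht : ∃ δ : ℝ, 0 < δ ∧ ∀ n, δ < t n)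
    (htI : ∃ M : ℝ, 0 < M ∧ {n : ℕ | M ≤ t n} ∈ I)
    (x : ℕ → L) {V : Set L} :
    IsClosed (WLimSet I t x V) := by
  obtain ⟨δ, hδ, hδt⟩ := ht
  obtain ⟨M, hM, hMI⟩ := htI
  refine isClosed_of_closure_subset fun y hy U hU => ?_
  obtain ⟨U₁, hU₁, hU₁U⟩ := exists_nhds_zero_half hU
  obtain ⟨W, hW, hWU₁, hWsolid⟩ := hsolid U₁ hU₁
  have hnhds : {z : L | M • (z - y) ∈ W} ∈ 𝓝 y :=
    ((continuous_id.sub continuous_const).const_smul M).continuousAt.preimage_mem_nhds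
      (by simpa using hW)
  obtain ⟨x', hx'y, hx'⟩ := mem_closure_iff_nhds.mp hy _ hnhds
  have hWWU : V + W + W ⊆ V + U := by
    rw [add_assoc]
    exact add_subset_add_left (add_subset_iff.mpr fun a ha b hb => hU₁U a (hWU₁ ha) b (hWU₁ hb))
  refine hI.2.1 _ _ (hI.2.2.1 _ _ (hx' W hW) hMI) fun n hn => ?_
  by_contra hnot
  simp only [mem_union, mem_ofPred_eq, not_or, not_not, not_le] at hnot
  exact hn (hWWU (hWsolid.smul_sub_mem_add hM (hδ.trans (hδt n)).le hnot.2.le hx'y hnot.1))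

/-- In a first-countable locally solid Riesz space, if the weighted sequence
`t` is `I`-bounded, then the rough weighted `I`-τ-limit set is closed. -/
theorem WLimSet_isClosed_of_Ibounded
    {L : Type*} [AddCommGroup L] [Lattice L] [Module ℝ L]
    [CovariantClass L L (· + ·) (· ≤ ·)] [PosSMulMono ℝ L]
    [TopologicalSpace L] [IsTopologicalAddGroup L] [ContinuousSMul ℝ L]
    [FirstCountableTopology L]
    (hsolid : ∀ U ∈ 𝓝 (0 : L), ∃ W ∈ 𝓝 (0 : L), W ⊆ U ∧ IsSolidSet W)
    {I : Set (Set ℕ)} (hI : IsAdmissibleIdeal I)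
    {t : ℕ → ℝ} (ht : ∃ δ : ℝ, 0 < δ ∧ ∀ n, δ < t n)
    (htI : ∃ M : ℝ, 0 < M ∧ {n : ℕ | M ≤ t n} ∈ I)
    (x : ℕ → L) {V : Set L} (hV : V ∈ 𝓝 (0 : L)) :
    IsClosed (WLimSet I t x V) :=
  WLimSet_isClosed_of_Ibounded_general hsolid hI ht htI x
end

section
/- Let (L, τ) be a Hausdorff locally solid Riesz space, I an admissible ideal on ℕ, (t_n) a weighted sequence of real numbers, x = (x_n) a sequence in L, and V a τ-bounded τ-neighborhood of zero. If the weighted sequence (t_n) is not I-bounded, then the rough weighted I_τ-limit set WI_τ-LIM^V x is a closed subset of L (indeed it is empty or a singleton). -/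
open Topology Filter Set Pointwise

theorem IsAdmissibleIdeal.exists_mem_notMem_union {I : Set (Set ℕ)} (hI : IsAdmissibleIdeal I)
    {A B C : Set ℕ} (hA : A ∉ I) (hB : B ∈ I) (hC : C ∈ I) : ∃ n ∈ A, n ∉ B ∪ C :=
  not_subset.mp fun hABC => hA (hI.2.1 _ _ (hI.2.2.1 _ _ hB hC) hABC)

section TopologicalVectorSpace

variable {E : Type*} [AddCommGroup E] [TopologicalSpace E]

theorem isVonNBounded_of_forall_subset_smul {𝕜 : Type*} [NontriviallyNormedField 𝕜]
    [Module 𝕜 E] [ContinuousSMul 𝕜 E] {s : Set E} (h : ∀ U ∈ 𝓝 (0 : E), ∃ c : 𝕜, s ⊆ c • U) :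
    Bornology.IsVonNBounded 𝕜 s := by
  refine (nhds_basis_balanced 𝕜 E).isVonNBounded_iff.mpr fun U ⟨hU, hbal⟩ => ?_
  obtain ⟨c, hc⟩ := h U hU
  exact absorbs_iff_norm.mpr ⟨‖c‖, fun d hd => hc.trans (hbal.smul_mono hd)⟩

variable [IsTopologicalAddGroup E] [Module ℝ E] [ContinuousSMul ℝ E]

theorem exists_nhds_zero_forall_smul_mem_add_imp_mem {B N : Set E}
    (hB : Bornology.IsVonNBounded ℝ B) (hN : N ∈ 𝓝 (0 : E)) :
    ∃ W ∈ 𝓝 (0 : E), ∃ μ : ℝ, 0 < μ ∧ ∀ c ≥ μ, ∀ z, c • z ∈ B + W → z ∈ N := by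
  obtain ⟨N', hN', hN'N⟩ := exists_nhds_zero_half hN
  obtain ⟨U, ⟨hU, hbal⟩, hUN'⟩ := (nhds_basis_balanced ℝ E).mem_iff.mp hN'
  obtain ⟨r, hr⟩ := absorbs_iff_norm.mp (hB hU)
  refine ⟨U, hU, max r 1, by positivity, fun c hc z ⟨v, hv, w, hw, hz⟩ => ?_⟩
  have hc1 : 1 ≤ c := le_of_max_le_right hc
  have hc0 : c ≠ 0 := by positivity
  obtain ⟨u, hu, rfl⟩ := hr c ((le_max_left r 1).trans (hc.trans (le_abs_self c))) hv
  have hc_inv : ‖c⁻¹‖ ≤ 1 := by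
    rw [norm_inv, Real.norm_of_nonneg (by positivity)]
    exact inv_le_one_of_one_le₀ hc1
  have hw' : c⁻¹ • w ∈ U := hbal.smul_mem hc_inv hw
  have hz' : z = u + c⁻¹ • w := by
    rw [← inv_smul_smul₀ hc0 z, ← hz]
    simp only [smul_add, inv_smul_smul₀ hc0]
  exact hz' ▸ hN'N u (hUN' hu) _ (hUN' hw')

end TopologicalVectorSpace

section WLimSet

variable {L : Type*} [AddCommGroup L] [Module ℝ L] [TopologicalSpace L]

theorem exists_large_weight_of_mem_WLimSet {I : Set (Set ℕ)} (hI : IsAdmissibleIdeal I)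
    {t : ℕ → ℝ} {x : ℕ → L} {V U : Set L} {M : ℝ} {a b : L} (hM : {n | M ≤ t n} ∉ I)
    (ha : a ∈ WLimSet I t x V) (hb : b ∈ WLimSet I t x V) (hU : U ∈ 𝓝 (0 : L)) :
    ∃ n, M ≤ t n ∧ t n • (x n - a) ∈ V + U ∧ t n • (x n - b) ∈ V + U := by
  obtain ⟨n, hn, hnab⟩ := hI.exists_mem_notMem_union hM (ha U hU) (hb U hU)
  simp only [mem_union, mem_ofPred_eq, not_or, not_not] at hnab
  exact ⟨n, hn, hnab⟩

variable [IsTopologicalAddGroup L] [ContinuousSMul ℝ L] [T2Space L]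

theorem WLimSet_subsingleton_of_not_Ibounded_s5 {I : Set (Set ℕ)} (hI : IsAdmissibleIdeal I)
    {t : ℕ → ℝ} (htI : ¬ ∃ M : ℝ, 0 < M ∧ {n : ℕ | M ≤ t n} ∈ I) (x : ℕ → L) {V : Set L}
    (hV : Bornology.IsVonNBounded ℝ V) : (WLimSet I t x V).Subsingleton := by
  intro a ha b hb
  suffices hab : ∀ N ∈ 𝓝 (0 : L), b - a ∈ N from
    (sub_eq_zero.mp (specializes_iff_pure.mpr hab).eq).symm
  intro N hN
  obtain ⟨W, hW, μ, hμ, hμN⟩ := exists_nhds_zero_forall_smul_mem_add_imp_mem (hV.sub hV) hN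
  obtain ⟨W', hW', -, hW'neg, hW'W⟩ := exists_closed_nhds_zero_neg_eq_add_subset hW
  obtain ⟨n, hn, hna, hnb⟩ :=
    exists_large_weight_of_mem_WLimSet hI (fun h => htI ⟨μ, hμ, h⟩) ha hb hW'
  refine hμN (t n) hn _ ?_
  have hsub : t n • (b - a) = t n • (x n - a) - t n • (x n - b) := by
    rw [← smul_sub, sub_sub_sub_cancel_left]
  have hdiff := sub_mem_sub hna hnb
  rw [add_sub_add_comm, sub_eq_add_neg W', hW'neg, ← hsub] at hdiff
  exact add_subset_add_left hW'W hdiff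

end WLimSet

theorem WLimSet_isClosed_of_not_Ibounded_general
    {L : Type*} [AddCommGroup L] [Module ℝ L]
    [TopologicalSpace L] [IsTopologicalAddGroup L] [ContinuousSMul ℝ L] [T2Space L]
    {I : Set (Set ℕ)} (hI : IsAdmissibleIdeal I)
    {t : ℕ → ℝ}
    (htI : ¬ ∃ M : ℝ, 0 < M ∧ {n : ℕ | M ≤ t n} ∈ I)
    (x : ℕ → L) {V : Set L}
    (hVbdd : ∀ U ∈ 𝓝 (0 : L), ∃ lam : ℝ, 0 < lam ∧ V ⊆ lam • U) :
    IsClosed (WLimSet I t x V) ∧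
      (WLimSet I t x V = ∅ ∨ ∃ a : L, WLimSet I t x V = {a}) := by
  have hV : Bornology.IsVonNBounded ℝ V :=
    isVonNBounded_of_forall_subset_smul fun U hU => (hVbdd U hU).imp fun _ h => h.2
  rcases (WLimSet_subsingleton_of_not_Ibounded_s5 hI htI x hV).eq_empty_or_singleton with h | ⟨a, h⟩
  · exact ⟨h ▸ isClosed_empty, Or.inl h⟩
  · exact ⟨h ▸ isClosed_singleton, Or.inr ⟨a, h⟩⟩

/-- In a Hausdorff locally solid Riesz space, if the weighted sequence `t`
is not `I`-bounded and the neighborhood `V` of zero is τ-bounded, then the rough weighted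
`I`-τ-limit set is closed (indeed it is empty or a singleton). -/
theorem WLimSet_isClosed_of_not_Ibounded
    {L : Type*} [AddCommGroup L] [Lattice L] [Module ℝ L]
    [CovariantClass L L (· + ·) (· ≤ ·)] [PosSMulMono ℝ L]
    [TopologicalSpace L] [IsTopologicalAddGroup L] [ContinuousSMul ℝ L] [T2Space L]
    (hsolid : ∀ U ∈ 𝓝 (0 : L), ∃ W ∈ 𝓝 (0 : L), W ⊆ U ∧ IsSolidSet W)
    {I : Set (Set ℕ)} (hI : IsAdmissibleIdeal I)
    {t : ℕ → ℝ} (ht : ∃ δ : ℝ, 0 < δ ∧ ∀ n, δ < t n)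
    (htI : ¬ ∃ M : ℝ, 0 < M ∧ {n : ℕ | M ≤ t n} ∈ I)
    (x : ℕ → L) {V : Set L} (hV : V ∈ 𝓝 (0 : L))
    (hVbdd : ∀ U ∈ 𝓝 (0 : L), ∃ lam : ℝ, 0 < lam ∧ V ⊆ lam • U) :
    IsClosed (WLimSet I t x V) ∧
      (WLimSet I t x V = ∅ ∨ ∃ a : L, WLimSet I t x V = {a}) :=
  WLimSet_isClosed_of_not_Ibounded_general hI htI x hVbdd
end

section
/- Let (L, τ) be a locally solid Riesz space, I an admissible ideal on ℕ, (t_n) a weighted sequence of real numbers, and x = (x_n) a sequence in L. If x is weighted I_τ-bounded, then for every τ-neighborhood V of zero there exists a real number μ > 0 such that the rough weighted I_τ-limit set WI_τ-LIM^{μV} x (with degree of roughness μ·V) is nonempty; in fact it contains the zero element of L. -/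
open Topology Filter Set Pointwise

theorem zero_mem_WLimSet_inv_smul {L : Type*} [AddCommGroup L] [Module ℝ L] [TopologicalSpace L]
    {I : Set (Set ℕ)} (hI : ∀ A B : Set ℕ, A ∈ I → B ⊆ A → B ∈ I) {t : ℕ → ℝ} {x : ℕ → L}
    {V : Set L} {lam : ℝ} (hlam : lam ≠ 0) (hV : {n : ℕ | (lam * t n) • x n ∉ V} ∈ I) :
    (0 : L) ∈ WLimSet I t x (lam⁻¹ • V) := by
  intro U hU
  refine hI _ _ hV fun n hn => ?_
  simp only [Set.mem_ofPred_eq, sub_zero] at hn ⊢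
  contrapose! hn
  refine Set.subset_add_left _ (mem_of_mem_nhds hU) ?_
  rwa [Set.mem_inv_smul_set_iff₀ hlam, smul_smul]

theorem WLimSet_nonempty_of_weighted_bounded_general
    {L : Type*} [AddCommGroup L] [Module ℝ L] [TopologicalSpace L]
    {I : Set (Set ℕ)} (hI : IsAdmissibleIdeal I)
    {t : ℕ → ℝ} (x : ℕ → L)
    (hxb : ∀ U ∈ 𝓝 (0 : L), ∃ lam : ℝ, 0 < lam ∧ {n : ℕ | (lam * t n) • x n ∉ U} ∈ I) :
    ∀ V ∈ 𝓝 (0 : L), ∃ μ : ℝ, 0 < μ ∧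
      (WLimSet I t x (μ • V)).Nonempty ∧ (0 : L) ∈ WLimSet I t x (μ • V) := by
  intro V hV
  obtain ⟨lam, hlam, hlamI⟩ := hxb V hV
  have h0 := zero_mem_WLimSet_inv_smul hI.2.1 hlam.ne' hlamI
  exact ⟨lam⁻¹, inv_pos.2 hlam, ⟨0, h0⟩, h0⟩

/-- In a locally solid Riesz space, if the sequence `x` is weighted
`I`-τ-bounded, then for every neighborhood `V` of zero there is `μ > 0` such that the rough
weighted `I`-τ-limit set with degree of roughness `μ • V` is nonempty; in fact it contains
the zero element. -/
theorem WLimSet_nonempty_of_weighted_bounded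
    {L : Type*} [AddCommGroup L] [Lattice L] [Module ℝ L]
    [CovariantClass L L (· + ·) (· ≤ ·)] [PosSMulMono ℝ L]
    [TopologicalSpace L] [IsTopologicalAddGroup L] [ContinuousSMul ℝ L]
    (hsolid : ∀ U ∈ 𝓝 (0 : L), ∃ W ∈ 𝓝 (0 : L), W ⊆ U ∧ IsSolidSet W)
    {I : Set (Set ℕ)} (hI : IsAdmissibleIdeal I)
    {t : ℕ → ℝ} (ht : ∃ δ : ℝ, 0 < δ ∧ ∀ n, δ < t n)
    (x : ℕ → L)
    (hxb : ∀ U ∈ 𝓝 (0 : L), ∃ lam : ℝ, 0 < lam ∧ {n : ℕ | (lam * t n) • x n ∉ U} ∈ I) :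
    ∀ V ∈ 𝓝 (0 : L), ∃ μ : ℝ, 0 < μ ∧
      (WLimSet I t x (μ • V)).Nonempty ∧ (0 : L) ∈ WLimSet I t x (μ • V) :=
  WLimSet_nonempty_of_weighted_bounded_general hI x hxb
end

section
/- Let (L, τ) be a locally solid Riesz space whose topology is first countable, I an admissible ideal on ℕ, (t_n) a weighted sequence of real numbers, and x = (x_n) a sequence in L. If the weighted sequence (t_n) is I-bounded, then the weighted I_τ-cluster point set W_IΓ_x^τ is a closed subset of L. -/
/-!
Let `c` be a limit of weighted cluster points and `M` the `I`-bound of the weights. Choose a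
cluster point `c'` with `M • (c' - c)` in a solid neighbourhood `W` of zero with `W + W ⊆ U`.
Since `|t n • (c' - c)| ≤ |M • (c' - c)|` whenever `0 < t n < M`, solidity gives
`t n • (c' - c) ∈ W` there, so every index with `t n • (x n - c') ∈ W` has
`t n • (x n - c) ∈ U` or lies in the `I`-small set `{n | M ≤ t n}`. Hence `c` is a cluster point.
-/

open Topology Filter Set Pointwise

section LatticeModule

variable {𝕜 L : Type*} [Field 𝕜] [LinearOrder 𝕜] [IsStrictOrderedRing 𝕜]
  [AddCommGroup L] [Lattice L] [AddLeftMono L] [Module 𝕜 L] [PosSMulMono 𝕜 L]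

theorem abs_smul_of_nonneg_s7 {a : 𝕜} (ha : 0 ≤ a) (w : L) : |a • w| = a • |w| := by
  rcases ha.eq_or_lt with rfl | ha
  · simp
  · simp only [abs, ← smul_neg]
    exact (map_sup (OrderIso.smulRight (β := L) ha) w (-w)).symm

theorem abs_smul_le_abs_smul_s7 {a b : 𝕜} (ha : 0 ≤ a) (hab : a ≤ b) (w : L) :
    |a • w| ≤ |b • w| := by
  rw [abs_smul_of_nonneg_s7 ha, abs_smul_of_nonneg_s7 (ha.trans hab)]
  simpa only [sub_smul, sub_nonneg] using smul_nonneg (sub_nonneg.2 hab) (abs_nonneg w)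

theorem IsSolidSet.smul_mem_of_le_s7 {S : Set L} (hS : IsSolidSet S) {a b : 𝕜} (ha : 0 ≤ a)
    (hab : a ≤ b) {w : L} (hw : b • w ∈ S) : a • w ∈ S :=
  hS _ _ (abs_smul_le_abs_smul_s7 ha hab w) hw

end LatticeModule

theorem exists_smul_sub_mem_of_mem_closure {R L : Type*} [TopologicalSpace L] [AddCommGroup L]
    [IsTopologicalAddGroup L] [SMulZeroClass R L] [ContinuousConstSMul R L]
    {S : Set L} {c : L} (hc : c ∈ closure S) (a : R) {W : Set L} (hW : W ∈ 𝓝 0) :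
    ∃ c' ∈ S, a • (c' - c) ∈ W := by
  have hcont : ContinuousAt (fun c' : L => a • (c' - c)) c := by fun_prop
  obtain ⟨c', hc'W, hc'S⟩ :=
    mem_closure_iff_nhds.mp hc _ (hcont.preimage_mem_nhds (by simpa using hW))
  exact ⟨c', hc'S, hc'W⟩

theorem WClusterSet_isClosed_of_Ibounded_general
    {L : Type*} [AddCommGroup L] [Lattice L] [Module ℝ L]
    [CovariantClass L L (· + ·) (· ≤ ·)] [PosSMulMono ℝ L]
    [TopologicalSpace L] [IsTopologicalAddGroup L] [ContinuousSMul ℝ L]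
    (hsolid : ∀ U ∈ 𝓝 (0 : L), ∃ W ∈ 𝓝 (0 : L), W ⊆ U ∧ IsSolidSet W)
    {I : Set (Set ℕ)} (hI : IsAdmissibleIdeal I)
    {t : ℕ → ℝ} (ht : ∃ δ : ℝ, 0 < δ ∧ ∀ n, δ < t n)
    (htI : ∃ M : ℝ, 0 < M ∧ {n : ℕ | M ≤ t n} ∈ I)
    (x : ℕ → L) :
    IsClosed (WClusterSet I t x) := by
  obtain ⟨δ, hδ, hδt⟩ := ht
  obtain ⟨M, -, hMI⟩ := htI
  refine isClosed_of_closure_subset fun c hc U hU hUI => ?_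
  obtain ⟨V, hV, hVU⟩ := exists_nhds_zero_half hU
  obtain ⟨W, hW, hWV, hWsolid⟩ := hsolid V hV
  obtain ⟨c', hc', hc'W⟩ := exists_smul_sub_mem_of_mem_closure hc M hW
  have hsplit : {n | t n • (x n - c') ∈ W} ⊆ {n | t n • (x n - c) ∈ U} ∪ {n | M ≤ t n} := by
    intro n hn
    refine (le_or_gt M (t n)).elim Or.inr fun hlt => Or.inl ?_
    have hshift : t n • (c' - c) ∈ W :=
      hWsolid.smul_mem_of_le_s7 (hδ.trans (hδt n)).le hlt.le hc'W
    have hdecomp : t n • (x n - c) = t n • (x n - c') + t n • (c' - c) := by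
      rw [← smul_add, sub_add_sub_cancel]
    rw [mem_ofPred_eq, hdecomp]
    exact hVU _ (hWV hn) _ (hWV hshift)
  exact hc' W hW (hI.mem_of_subset_union hUI hMI hsplit)

/-- In a first-countable locally solid Riesz space, if the weighted sequence
`t` is `I`-bounded, then the set of weighted `I`-τ-cluster points of `x` is closed. -/
theorem WClusterSet_isClosed_of_Ibounded
    {L : Type*} [AddCommGroup L] [Lattice L] [Module ℝ L]
    [CovariantClass L L (· + ·) (· ≤ ·)] [PosSMulMono ℝ L]
    [TopologicalSpace L] [IsTopologicalAddGroup L] [ContinuousSMul ℝ L]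
    [FirstCountableTopology L]
    (hsolid : ∀ U ∈ 𝓝 (0 : L), ∃ W ∈ 𝓝 (0 : L), W ⊆ U ∧ IsSolidSet W)
    {I : Set (Set ℕ)} (hI : IsAdmissibleIdeal I)
    {t : ℕ → ℝ} (ht : ∃ δ : ℝ, 0 < δ ∧ ∀ n, δ < t n)
    (htI : ∃ M : ℝ, 0 < M ∧ {n : ℕ | M ≤ t n} ∈ I)
    (x : ℕ → L) :
    IsClosed (WClusterSet I t x) :=
  WClusterSet_isClosed_of_Ibounded_general hsolid hI ht htI x
end

section
/- Let (L, τ) be a locally solid Riesz space, I an admissible ideal on ℕ, (t_n) a weighted sequence of real numbers, and x = (x_n) a sequence in L. If c ∈ L is a weighted I_τ-cluster point of the sequence (x_n), then |c| is a weighted I_τ-cluster point of the sequence (|x_n|), where |x| = x ⊔ (−x). -/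
open Topology Filter Set Pointwise

/-! Scaling by a positive real is an order automorphism of `L`, so it commutes
with `|·|`; hence `|t • (|x| - |c|)| ≤ |t • (x - c)|` by the reverse triangle inequality, and
solidity moves membership in a neighbourhood of zero from the right-hand side to the left. -/

theorem abs_smul_of_pos {𝕜 M : Type*} [Field 𝕜] [LinearOrder 𝕜] [IsStrictOrderedRing 𝕜]
    [AddCommGroup M] [Lattice M] [Module 𝕜 M] [PosSMulMono 𝕜 M] {r : 𝕜} (hr : 0 < r) (a : M) :
    |r • a| = r • |a| := by
  change r • a ⊔ -(r • a) = r • (a ⊔ -a)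
  rw [← smul_neg]
  exact ((OrderIso.smulRight hr).map_sup a (-a)).symm

theorem IsSolidSet.smul_abs_sub_abs_mem {𝕜 M : Type*} [Field 𝕜] [LinearOrder 𝕜]
    [IsStrictOrderedRing 𝕜] [AddCommGroup M] [Lattice M] [AddLeftMono M] [Module 𝕜 M]
    [PosSMulMono 𝕜 M] {W : Set M} (hW : IsSolidSet W) {r : 𝕜} (hr : 0 < r) {a b : M}
    (h : r • (a - b) ∈ W) : r • (|a| - |b|) ∈ W := by
  refine hW _ _ ?_ h
  change |r • (|a| - |b|)| ≤ |r • (a - b)|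
  rw [abs_smul_of_pos hr, abs_smul_of_pos hr]
  exact smul_le_smul_of_nonneg_left (abs_abs_sub_abs_le a b) hr.le

theorem mem_WClusterSet_of_forall_nhds {L : Type*} [AddCommGroup L] [Module ℝ L]
    [TopologicalSpace L] {I : Set (Set ℕ)} (hI : ∀ A B : Set ℕ, A ∈ I → B ⊆ A → B ∈ I)
    {t : ℕ → ℝ} {x y : ℕ → L} {c d : L}
    (h : ∀ U ∈ 𝓝 (0 : L), ∃ W ∈ 𝓝 (0 : L), ∀ n, t n • (x n - c) ∈ W → t n • (y n - d) ∈ U)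
    (hc : c ∈ WClusterSet I t x) : d ∈ WClusterSet I t y := by
  intro U hU hUI
  obtain ⟨W, hW, hWU⟩ := h U hU
  exact hc W hW (hI _ _ hUI hWU)

theorem abs_mem_WClusterSet_general
    {L : Type*} [AddCommGroup L] [Lattice L] [Module ℝ L]
    [CovariantClass L L (· + ·) (· ≤ ·)] [PosSMulMono ℝ L]
    [TopologicalSpace L]
    (hsolid : ∀ U ∈ 𝓝 (0 : L), ∃ W ∈ 𝓝 (0 : L), W ⊆ U ∧ IsSolidSet W)
    {I : Set (Set ℕ)} (hI : IsAdmissibleIdeal I)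
    {t : ℕ → ℝ} (ht : ∃ δ : ℝ, 0 < δ ∧ ∀ n, δ < t n)
    (x : ℕ → L) (c : L) (hc : c ∈ WClusterSet I t x) :
    (c ⊔ -c) ∈ WClusterSet I t (fun n => x n ⊔ -(x n)) := by
  obtain ⟨δ, hδ, hδt⟩ := ht
  refine mem_WClusterSet_of_forall_nhds hI.2.1 (fun U hU => ?_) hc
  obtain ⟨W, hW, hWU, hWsolid⟩ := hsolid U hU
  exact ⟨W, hW, fun n hn => hWU (hWsolid.smul_abs_sub_abs_mem (hδ.trans (hδt n)) hn)⟩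

/-- In a locally solid Riesz space, if `c` is a weighted `I`-τ-cluster point
of `(x n)`, then `|c| = c ⊔ -c` is a weighted `I`-τ-cluster point of `(|x n|)`. -/
theorem abs_mem_WClusterSet
    {L : Type*} [AddCommGroup L] [Lattice L] [Module ℝ L]
    [CovariantClass L L (· + ·) (· ≤ ·)] [PosSMulMono ℝ L]
    [TopologicalSpace L] [IsTopologicalAddGroup L] [ContinuousSMul ℝ L]
    (hsolid : ∀ U ∈ 𝓝 (0 : L), ∃ W ∈ 𝓝 (0 : L), W ⊆ U ∧ IsSolidSet W)
    {I : Set (Set ℕ)} (hI : IsAdmissibleIdeal I)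
    {t : ℕ → ℝ} (ht : ∃ δ : ℝ, 0 < δ ∧ ∀ n, δ < t n)
    (x : ℕ → L) (c : L) (hc : c ∈ WClusterSet I t x) :
    (c ⊔ -c) ∈ WClusterSet I t (fun n => x n ⊔ -(x n)) :=
  abs_mem_WClusterSet_general hsolid hI ht x c hc
end

section
/- Let (L, τ) be a locally solid Riesz space, I an admissible ideal on ℕ, (t_n) a weighted sequence of real numbers, and x = (x_n) a sequence in L. If c ∈ L is a weighted I_τ-cluster point of the sequence (x_n), then the positive part c⁺ = c ⊔ 0 is a weighted I_τ-cluster point of the sequence (x_n⁺) of positive parts. -/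
open Topology Filter Set Pointwise

/-!
Birkhoff's inequality `|x⁺ - c⁺| ≤ |x - c|` says that the positive part is a lattice contraction.
As multiplication by `t n > 0` commutes with `|·|`, every index `n` with `t n • (x n - c)` in a solid
neighbourhood `W` also has `t n • ((x n)⁺ - c⁺) ∈ W`; the latter index set therefore contains a set
outside `I`, so it is not in `I` either.
-/

theorem abs_smul_of_nonneg_s9 {𝕜 L : Type*} [Field 𝕜] [LinearOrder 𝕜] [IsStrictOrderedRing 𝕜]
    [AddCommGroup L] [Lattice L] [Module 𝕜 L] [PosSMulMono 𝕜 L] {r : 𝕜} (hr : 0 ≤ r) (a : L) :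
    |r • a| = r • |a| := by
  rcases hr.eq_or_lt with rfl | hr
  · simp [abs]
  · rw [abs, abs, ← smul_neg]
    exact ((OrderIso.smulRight hr).map_sup a (-a)).symm

theorem mem_WClusterSet_of_abs_sub_le {L : Type*} [AddCommGroup L] [Lattice L] [Module ℝ L]
    [PosSMulMono ℝ L] [TopologicalSpace L]
    (hsolid : ∀ U ∈ 𝓝 (0 : L), ∃ W ∈ 𝓝 (0 : L), W ⊆ U ∧ IsSolidSet W)
    {I : Set (Set ℕ)} (hI : ∀ A B : Set ℕ, A ∈ I → B ⊆ A → B ∈ I)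
    {t : ℕ → ℝ} (ht : ∀ n, 0 ≤ t n) {x y : ℕ → L} {c d : L} (hc : c ∈ WClusterSet I t x)
    (hle : ∀ n, |y n - d| ≤ |x n - c|) : d ∈ WClusterSet I t y := by
  intro U hU hyI
  obtain ⟨W, hW, hWU, hWsolid⟩ := hsolid U hU
  have habs (n : ℕ) : |t n • (y n - d)| ≤ |t n • (x n - c)| := by
    rw [abs_smul_of_nonneg_s9 (ht n), abs_smul_of_nonneg_s9 (ht n)]
    exact smul_le_smul_of_nonneg_left (hle n) (ht n)
  exact hc W hW (hI _ _ hyI fun n hn ↦ hWU (hWsolid _ _ (habs n) hn))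

theorem posPart_mem_WClusterSet_general
    {L : Type*} [AddCommGroup L] [Lattice L] [Module ℝ L]
    [CovariantClass L L (· + ·) (· ≤ ·)] [PosSMulMono ℝ L]
    [TopologicalSpace L]
    (hsolid : ∀ U ∈ 𝓝 (0 : L), ∃ W ∈ 𝓝 (0 : L), W ⊆ U ∧ IsSolidSet W)
    {I : Set (Set ℕ)} (hI : IsAdmissibleIdeal I)
    {t : ℕ → ℝ} (ht : ∃ δ : ℝ, 0 < δ ∧ ∀ n, δ < t n)
    (x : ℕ → L) (c : L) (hc : c ∈ WClusterSet I t x) :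
    (c ⊔ 0) ∈ WClusterSet I t (fun n => x n ⊔ 0) := by
  obtain ⟨δ, hδ, hδt⟩ := ht
  exact mem_WClusterSet_of_abs_sub_le hsolid hI.2.1 (fun n ↦ (hδ.trans (hδt n)).le) hc
    fun n ↦ abs_sup_sub_sup_le_abs (x n) c 0

/-- In a locally solid Riesz space, if `c` is a weighted `I`-τ-cluster point
of `(x n)`, then the positive part `c⁺ = c ⊔ 0` is a weighted `I`-τ-cluster point of the sequence of positive parts `(x n ⊔ 0)`. -/
theorem posPart_mem_WClusterSet
    {L : Type*} [AddCommGroup L] [Lattice L] [Module ℝ L]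
    [CovariantClass L L (· + ·) (· ≤ ·)] [PosSMulMono ℝ L]
    [TopologicalSpace L] [IsTopologicalAddGroup L] [ContinuousSMul ℝ L]
    (hsolid : ∀ U ∈ 𝓝 (0 : L), ∃ W ∈ 𝓝 (0 : L), W ⊆ U ∧ IsSolidSet W)
    {I : Set (Set ℕ)} (hI : IsAdmissibleIdeal I)
    {t : ℕ → ℝ} (ht : ∃ δ : ℝ, 0 < δ ∧ ∀ n, δ < t n)
    (x : ℕ → L) (c : L) (hc : c ∈ WClusterSet I t x) :
    (c ⊔ 0) ∈ WClusterSet I t (fun n => x n ⊔ 0) :=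
  posPart_mem_WClusterSet_general hsolid hI ht x c hc
end

section
/- Let (L, τ) be a locally solid Riesz space, I an admissible ideal on ℕ, (t_n) a weighted sequence of real numbers, and x = (x_n) a sequence in L. If c ∈ L is a weighted I_τ-cluster point of the sequence (x_n), then the negative part c⁻ = (−c) ⊔ 0 is a weighted I_τ-cluster point of the sequence (x_n⁻) of negative parts. -/
open Topology Filter Set Pointwise

/-! Taking negative parts does not increase `|·|` (Birkhoff's inequality), and `|t • a| = t • |a|`
for `t > 0`, so `|t n • (x n⁻ - c⁻)| ≤ |t n • (x n - c)|`. Every neighbourhood of zero contains a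
solid one, so each index set for `c⁻` contains the corresponding index set for `c`, which is not
in `I`. -/

section LatticeOrderedModule

variable {𝕜 L : Type*} [Field 𝕜] [LinearOrder 𝕜] [IsStrictOrderedRing 𝕜]
  [AddCommGroup L] [Lattice L] [Module 𝕜 L] [PosSMulMono 𝕜 L]

lemma abs_smul_of_pos_s10 {r : 𝕜} (hr : 0 < r) (a : L) : |r • a| = r • |a| := by
  calc |r • a| = r • a ⊔ r • -a := by rw [abs, smul_neg]
    _ = r • |a| := ((OrderIso.smulRight hr).map_sup a (-a)).symm

end LatticeOrderedModule

lemma abs_negPart_sub_negPart_le {L : Type*} [AddCommGroup L] [Lattice L]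
    [AddLeftMono L] (a b : L) : |a⁻ - b⁻| ≤ |a - b| := by
  simpa only [negPart_def, neg_sub_neg, abs_sub_comm b a] using abs_sup_sub_sup_le_abs (-a) (-b) 0

lemma IsSolidSet.mem_of_abs_le {L : Type*} [Lattice L] [AddCommGroup L] {W : Set L}
    (hW : IsSolidSet W) {a b : L} (hab : |a| ≤ |b|) (hb : b ∈ W) : a ∈ W :=
  hW a b hab hb

lemma mem_WClusterSet_of_abs_smul_sub_le {L : Type*} [AddCommGroup L] [Lattice L] [Module ℝ L]
    [TopologicalSpace L] (hsolid : ∀ U ∈ 𝓝 (0 : L), ∃ W ∈ 𝓝 (0 : L), W ⊆ U ∧ IsSolidSet W)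
    {I : Set (Set ℕ)} (hI : ∀ A B : Set ℕ, A ∈ I → B ⊆ A → B ∈ I) {t : ℕ → ℝ} {x y : ℕ → L}
    {c d : L} (hle : ∀ n, |t n • (y n - d)| ≤ |t n • (x n - c)|) (hc : c ∈ WClusterSet I t x) :
    d ∈ WClusterSet I t y := by
  intro U hU hdU
  obtain ⟨W, hW, hWU, hWsolid⟩ := hsolid U hU
  exact hc W hW <| hI _ _ hdU fun n hn => hWU (hWsolid.mem_of_abs_le (hle n) hn)

theorem negPart_mem_WClusterSet_general
    {L : Type*} [AddCommGroup L] [Lattice L] [Module ℝ L]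
    [CovariantClass L L (· + ·) (· ≤ ·)] [PosSMulMono ℝ L]
    [TopologicalSpace L]
    (hsolid : ∀ U ∈ 𝓝 (0 : L), ∃ W ∈ 𝓝 (0 : L), W ⊆ U ∧ IsSolidSet W)
    {I : Set (Set ℕ)} (hI : IsAdmissibleIdeal I)
    {t : ℕ → ℝ} (ht : ∃ δ : ℝ, 0 < δ ∧ ∀ n, δ < t n)
    (x : ℕ → L) (c : L) (hc : c ∈ WClusterSet I t x) :
    (-c ⊔ 0) ∈ WClusterSet I t (fun n => -(x n) ⊔ 0) := by
  obtain ⟨δ, hδ, htδ⟩ := ht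
  refine mem_WClusterSet_of_abs_smul_sub_le hsolid hI.2.1 (fun n => ?_) hc
  have htn : 0 < t n := hδ.trans (htδ n)
  rw [abs_smul_of_pos_s10 htn, abs_smul_of_pos_s10 htn]
  exact smul_le_smul_of_nonneg_left (abs_negPart_sub_negPart_le _ _) htn.le

/-- In a locally solid Riesz space, if `c` is a weighted `I`-τ-cluster point
of `(x n)`, then the negative part `c⁻ = (-c) ⊔ 0` is a weighted `I`-τ-cluster point of the sequence of negative parts `((-x n) ⊔ 0)`. -/
theorem negPart_mem_WClusterSet
    {L : Type*} [AddCommGroup L] [Lattice L] [Module ℝ L]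
    [CovariantClass L L (· + ·) (· ≤ ·)] [PosSMulMono ℝ L]
    [TopologicalSpace L] [IsTopologicalAddGroup L] [ContinuousSMul ℝ L]
    (hsolid : ∀ U ∈ 𝓝 (0 : L), ∃ W ∈ 𝓝 (0 : L), W ⊆ U ∧ IsSolidSet W)
    {I : Set (Set ℕ)} (hI : IsAdmissibleIdeal I)
    {t : ℕ → ℝ} (ht : ∃ δ : ℝ, 0 < δ ∧ ∀ n, δ < t n)
    (x : ℕ → L) (c : L) (hc : c ∈ WClusterSet I t x) :
    (-c ⊔ 0) ∈ WClusterSet I t (fun n => -(x n) ⊔ 0) :=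
  negPart_mem_WClusterSet_general hsolid hI ht x c hc
end

section
/- Let (L, τ) be a Hausdorff locally solid Riesz space, I an admissible ideal on ℕ, (t_n) a weighted sequence of real numbers, and x = (x_n) a sequence in L. Let V be a τ-bounded solid τ-neighborhood of zero such that both V + U and V + V + U are solid τ-neighborhoods of zero for every solid τ-neighborhood U of zero. If the rough weighted I_τ-limit set WI_τ-LIM^V x is nonempty, then the weighted I_τ-cluster point set W_IΓ_x^τ is a τ-bounded subset of L. -/
open Topology Filter Set Pointwise

/-!
If `x'` is a rough weighted limit and `c` a weighted cluster point, then for a small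
neighborhood `W` of zero some index `n` has both `t n • (x n - x') ∈ V + W` and
`t n • (x n - c) ∈ W`, so `t n • (c - x') ∈ V + V`. Since `t n ≥ δ` and `V + V` is solid,
shrinking the weight gives `δ • (c - x') ∈ V + V`. Hence every cluster point lies in
`x' + δ⁻¹ • (V + V)`, a translate of a multiple of a sum of bounded sets.
-/

section Solid

variable {L : Type*} [AddCommGroup L] [Lattice L] [Module ℝ L]
  [CovariantClass L L (· + ·) (· ≤ ·)] [PosSMulMono ℝ L]

theorem abs_smul_le_abs_s12 {r : ℝ} (hr₀ : 0 ≤ r) (hr₁ : r ≤ 1) (z : L) : |r • z| ≤ |z| := by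
  have hrz : r • |z| ≤ |z| :=
    calc r • |z| ≤ r • |z| + (1 - r) • |z| :=
          le_add_of_nonneg_right (smul_nonneg (sub_nonneg.2 hr₁) (abs_nonneg z))
      _ = |z| := by rw [← add_smul, add_sub_cancel, one_smul]
  refine sup_le ((smul_le_smul_of_nonneg_left le_sup_left hr₀).trans hrz) ?_
  rw [← smul_neg]
  exact (smul_le_smul_of_nonneg_left le_sup_right hr₀).trans hrz

theorem IsSolidSet.smul_mem_s12 {S : Set L} (hS : IsSolidSet S) {r : ℝ} (hr₀ : 0 ≤ r) (hr₁ : r ≤ 1)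
    {z : L} (hz : z ∈ S) : r • z ∈ S :=
  hS _ _ (abs_smul_le_abs_s12 hr₀ hr₁ z) hz

end Solid

section Weighted

variable {L : Type*} [AddCommGroup L] [Module ℝ L] [TopologicalSpace L] [IsTopologicalAddGroup L]
  {I : Set (Set ℕ)} {t : ℕ → ℝ} {x : ℕ → L} {V U : Set L} {x' c : L}

theorem exists_smul_sub_mem_add_of_mem_WLimSet_of_mem_WClusterSet
    (hI : ∀ A B : Set ℕ, A ∈ I → B ⊆ A → B ∈ I) (hx' : x' ∈ WLimSet I t x V)
    (hc : c ∈ WClusterSet I t x) (hU : U ∈ 𝓝 0) : ∃ n, t n • (c - x') ∈ V + U := by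
  obtain ⟨W, hW, hWU⟩ := exists_nhds_half_neg hU
  obtain ⟨n, hnc, hnx'⟩ := not_subset.1 fun h ↦ hc W hW (hI _ _ (hx' W hW) h)
  obtain ⟨v, hv, w, hw, hvw : v + w = _⟩ := not_not.1 hnx'
  refine ⟨n, mem_add.2 ⟨v, hv, w - t n • (x n - c), hWU w hw _ hnc, ?_⟩⟩
  rw [← add_sub_assoc, hvw, ← smul_sub, sub_sub_sub_cancel_left]

variable [Lattice L] [CovariantClass L L (· + ·) (· ≤ ·)] [PosSMulMono ℝ L]

theorem smul_sub_mem_add_of_mem_WLimSet_of_mem_WClusterSet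
    (hI : ∀ A B : Set ℕ, A ∈ I → B ⊆ A → B ∈ I) {δ : ℝ} (hδ : 0 < δ) (hδt : ∀ n, δ ≤ t n)
    (hU : U ∈ 𝓝 0) (hVU : IsSolidSet (V + U)) (hx' : x' ∈ WLimSet I t x V)
    (hc : c ∈ WClusterSet I t x) : δ • (c - x') ∈ V + U := by
  obtain ⟨n, hn⟩ := exists_smul_sub_mem_add_of_mem_WLimSet_of_mem_WClusterSet hI hx' hc hU
  have htn : 0 < t n := hδ.trans_le (hδt n)
  have hδ_eq : δ • (c - x') = (δ / t n) • t n • (c - x') := by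
    rw [smul_smul, div_mul_cancel₀ _ htn.ne']
  rw [hδ_eq]
  exact hVU.smul_mem_s12 (div_nonneg hδ.le htn.le) ((div_le_one htn).2 (hδt n)) hn

theorem WClusterSet_subset_vadd_smul_add
    (hI : ∀ A B : Set ℕ, A ∈ I → B ⊆ A → B ∈ I) {δ : ℝ} (hδ : 0 < δ) (hδt : ∀ n, δ ≤ t n)
    (hV : V ∈ 𝓝 0) (hVV : IsSolidSet (V + V)) (hx' : x' ∈ WLimSet I t x V) :
    WClusterSet I t x ⊆ x' +ᵥ δ⁻¹ • (V + V) := fun c hc ↦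
  ⟨δ⁻¹ • δ • (c - x'),
    smul_mem_smul_set (smul_sub_mem_add_of_mem_WLimSet_of_mem_WClusterSet hI hδ hδt hV hVV hx' hc),
    by rw [inv_smul_smul₀ hδ.ne']; exact add_sub_cancel x' c⟩

end Weighted

namespace Bornology

theorem IsVonNBounded.smul_set {𝕜 E : Type*} [NormedField 𝕜] [AddCommGroup E] [Module 𝕜 E]
    [TopologicalSpace E] [ContinuousConstSMul 𝕜 E] {s : Set E} (hs : IsVonNBounded 𝕜 s) (a : 𝕜) :
    IsVonNBounded 𝕜 (a • s) := by
  rw [← image_smul]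
  exact hs.image (a • ContinuousLinearMap.id 𝕜 E)

theorem isVonNBounded_iff_forall_exists_pos_subset_smul {E : Type*} [AddCommGroup E]
    [Module ℝ E] [TopologicalSpace E] [ContinuousSMul ℝ E] {s : Set E} :
    IsVonNBounded ℝ s ↔ ∀ U ∈ 𝓝 (0 : E), ∃ r : ℝ, 0 < r ∧ s ⊆ r • U := by
  refine ⟨fun hs U hU ↦ ?_, fun h ↦ (nhds_basis_balanced ℝ E).isVonNBounded_iff.2 ?_⟩
  · obtain ⟨r, hr, hsub⟩ := (hs hU).exists_pos
    exact ⟨r, hr, hsub r (Real.le_norm_self r)⟩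
  · rintro U ⟨hU, hbal⟩
    obtain ⟨r, hr, hsub⟩ := h U hU
    refine absorbs_iff_norm.2 ⟨r, fun a ha ↦ hsub.trans (hbal.smul_mono ?_)⟩
    rwa [Real.norm_of_nonneg hr.le]

end Bornology

theorem WClusterSet_tauBounded_general
    {L : Type*} [AddCommGroup L] [Lattice L] [Module ℝ L]
    [CovariantClass L L (· + ·) (· ≤ ·)] [PosSMulMono ℝ L]
    [TopologicalSpace L] [IsTopologicalAddGroup L] [ContinuousSMul ℝ L]
    {I : Set (Set ℕ)} (hI : IsAdmissibleIdeal I)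
    {t : ℕ → ℝ} (ht : ∃ δ : ℝ, 0 < δ ∧ ∀ n, δ < t n)
    (x : ℕ → L) {V : Set L} (hV : V ∈ 𝓝 (0 : L)) (hVsolid : IsSolidSet V)
    (hVbdd : ∀ U ∈ 𝓝 (0 : L), ∃ lam : ℝ, 0 < lam ∧ V ⊆ lam • U)
    (hVU : ∀ U ∈ 𝓝 (0 : L), IsSolidSet U → (V + U ∈ 𝓝 (0 : L) ∧ IsSolidSet (V + U)))
    (hne : (WLimSet I t x V).Nonempty) :
    ∀ U ∈ 𝓝 (0 : L), ∃ lam : ℝ, 0 < lam ∧ WClusterSet I t x ⊆ lam • U := by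
  obtain ⟨δ, hδ, hδt⟩ := ht
  obtain ⟨x', hx'⟩ := hne
  have hVbounded : Bornology.IsVonNBounded ℝ V :=
    Bornology.isVonNBounded_iff_forall_exists_pos_subset_smul.2 hVbdd
  have hsub := WClusterSet_subset_vadd_smul_add hI.2.1 hδ (fun n ↦ (hδt n).le) hV
    (hVU V hV hVsolid).2 hx'
  exact Bornology.isVonNBounded_iff_forall_exists_pos_subset_smul.1
    ((((hVbounded.add hVbounded).smul_set δ⁻¹).vadd x').subset hsub)

/-- In a Hausdorff locally solid Riesz space, let `V` be a τ-bounded solid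
neighborhood of zero such that `V + U` and `V + V + U` are solid neighborhoods of zero for
every solid neighborhood `U` of zero. If the rough weighted `I`-τ-limit set of `x` with
roughness `V` is nonempty, then the weighted `I`-τ-cluster point set of `x` is τ-bounded. -/
theorem WClusterSet_tauBounded
    {L : Type*} [AddCommGroup L] [Lattice L] [Module ℝ L]
    [CovariantClass L L (· + ·) (· ≤ ·)] [PosSMulMono ℝ L]
    [TopologicalSpace L] [IsTopologicalAddGroup L] [ContinuousSMul ℝ L] [T2Space L]
    (hsolid : ∀ U ∈ 𝓝 (0 : L), ∃ W ∈ 𝓝 (0 : L), W ⊆ U ∧ IsSolidSet W)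
    {I : Set (Set ℕ)} (hI : IsAdmissibleIdeal I)
    {t : ℕ → ℝ} (ht : ∃ δ : ℝ, 0 < δ ∧ ∀ n, δ < t n)
    (x : ℕ → L) {V : Set L} (hV : V ∈ 𝓝 (0 : L)) (hVsolid : IsSolidSet V)
    (hVbdd : ∀ U ∈ 𝓝 (0 : L), ∃ lam : ℝ, 0 < lam ∧ V ⊆ lam • U)
    (hVU : ∀ U ∈ 𝓝 (0 : L), IsSolidSet U → (V + U ∈ 𝓝 (0 : L) ∧ IsSolidSet (V + U)))
    (hVVU : ∀ U ∈ 𝓝 (0 : L), IsSolidSet U →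
      (V + V + U ∈ 𝓝 (0 : L) ∧ IsSolidSet (V + V + U)))
    (hne : (WLimSet I t x V).Nonempty) :
    ∀ U ∈ 𝓝 (0 : L), ∃ lam : ℝ, 0 < lam ∧ WClusterSet I t x ⊆ lam • U :=
  WClusterSet_tauBounded_general hI ht x hV hVsolid hVbdd hVU hne
end

section
/- Work in ℝ² with the max norm ‖(ξ,η)‖ = max(|ξ|,|η|), coordinatewise order, and the norm topology, and let I_d be the ideal of subsets of ℕ of natural density zero. Define t_n = n for all n ≥ 1, x_n = (1,0) if n is not a perfect square and x_n = (n,n) if n is a perfect square, and V = {(ξ,η) ∈ ℝ² : ‖(ξ,η)‖ ≤ 1} ∪ {(ξ,η) ∈ ℝ² : ξ = η}. Then the rough weighted I_τ-limit set of x with degree of roughness V equals the line {(ξ,η) ∈ ℝ² : ξ − η = 1}. (This set is convex although V is not convex.) -/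
open Topology Filter Set Pointwise

/-- The ideal of subsets of ℕ of natural density zero. -/
def densityZeroIdeal : Set (Set ℕ) :=
  {A | Tendsto (fun n : ℕ => ((A ∩ Set.Icc 1 n).ncard : ℝ) / n) atTop (𝓝 0)}

/-- The sequence of Example 1: `x n = (n, n)` if `n` is a perfect square,
`x n = (1, 0)` otherwise. -/
noncomputable def xSeq13 : ℕ → ℝ × ℝ := fun n =>
  if IsSquare n then ((n : ℝ), (n : ℝ)) else (1, 0)

/-- The degree of roughness of Example 1: the closed unit ball for the max norm together
with the diagonal. -/
def V13 : Set (ℝ × ℝ) := {p | ‖p‖ ≤ 1} ∪ {p | p.1 = p.2}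

/-!
For a non-square `n` the point `n • (x n - x*)` lies on the line `ξ - η = n (1 - (x*.1 - x*.2))`,
and the squares have density zero. If `x*.1 - x*.2 = 1` the non-square terms therefore land on
the diagonal, which is contained in `V13`. Otherwise `|ξ - η|` grows linearly along the
non-squares, whereas it is bounded by `4` on `V13 + ball 0 1`, so all large non-squares are
exceptional indices; together with the squares and a finite set they would cover `ℕ`.
-/

lemma ncard_setOf_isSquare_inter_Icc_le (n : ℕ) :
    ({k | IsSquare k} ∩ Icc 1 n).ncard ≤ Nat.sqrt n := by
  have hsub : {k | IsSquare k} ∩ Icc 1 n ⊆ (fun m => m * m) '' Icc 1 (Nat.sqrt n) := by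
    rintro _ ⟨⟨m, rfl⟩, hm1, hmn⟩
    refine ⟨m, ⟨Nat.pos_of_ne_zero ?_, Nat.le_sqrt.2 hmn⟩, rfl⟩
    rintro rfl
    simp at hm1
  calc _ ≤ ((fun m => m * m) '' Icc 1 (Nat.sqrt n)).ncard := ncard_le_ncard hsub
    _ ≤ (Icc 1 (Nat.sqrt n)).ncard := ncard_image_le (finite_Icc _ _)
    _ = Nat.sqrt n := by simp [ncard_eq_toFinset_card']

namespace densityZeroIdeal

lemma mono {A B : Set ℕ} (hAB : A ⊆ B) (hB : B ∈ densityZeroIdeal) : A ∈ densityZeroIdeal := by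
  refine squeeze_zero (fun n => by positivity) (fun n => ?_) hB
  gcongr
  exact (finite_Icc 1 n).inter_of_right B

lemma union_mem {A B : Set ℕ} (hA : A ∈ densityZeroIdeal) (hB : B ∈ densityZeroIdeal) :
    A ∪ B ∈ densityZeroIdeal := by
  refine squeeze_zero (fun n => by positivity) (fun n => ?_) (by simpa using hA.add hB)
  rw [← add_div, union_inter_distrib_right]
  gcongr
  exact_mod_cast ncard_union_le _ _

lemma _root_.Set.Finite.mem_densityZeroIdeal {A : Set ℕ} (hA : A.Finite) :
    A ∈ densityZeroIdeal := by
  refine squeeze_zero (fun n => by positivity) (fun n => ?_)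
    (tendsto_const_div_atTop_nhds_zero_nat (A.ncard : ℝ))
  gcongr ?_ / _
  exact_mod_cast ncard_le_ncard inter_subset_left hA

lemma univ_not_mem : univ ∉ densityZeroIdeal := by
  intro h
  have hone : Tendsto (fun n : ℕ => ((univ ∩ Set.Icc 1 n).ncard : ℝ) / n) atTop (𝓝 1) := by
    refine tendsto_const_nhds.congr' ?_
    filter_upwards [eventually_ge_atTop 1] with n hn
    rw [univ_inter, ncard_eq_toFinset_card', toFinset_Icc, Nat.card_Icc, Nat.add_sub_cancel,
      div_self (by positivity)]
  exact one_ne_zero (tendsto_nhds_unique hone h)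

lemma setOf_isSquare_mem : {k | IsSquare k} ∈ densityZeroIdeal := by
  have hinv : Tendsto (fun n : ℕ => (√(n : ℝ))⁻¹) atTop (𝓝 0) :=
    (Real.tendsto_sqrt_atTop.comp tendsto_natCast_atTop_atTop).inv_tendsto_atTop
  refine squeeze_zero (fun n => by positivity) (fun n => ?_) hinv
  calc _ ≤ (Nat.sqrt n : ℝ) / n := by
        gcongr; exact_mod_cast ncard_setOf_isSquare_inter_Icc_le n
    _ ≤ √(n : ℝ) / n := by gcongr; exact Real.nat_sqrt_le_real_sqrt
    _ = (√(n : ℝ))⁻¹ := Real.sqrt_div_self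

lemma setOf_le_and_not_isSquare_not_mem (N : ℕ) :
    {k | N ≤ k ∧ ¬IsSquare k} ∉ densityZeroIdeal := by
  intro h
  have hcover : univ = ({k | N ≤ k ∧ ¬IsSquare k} ∪ {k | IsSquare k}) ∪ Iio N := by
    ext k
    by_cases hk : N ≤ k <;> by_cases hsq : IsSquare k <;> simp [hk, hsq, ← not_le]
  refine univ_not_mem ?_
  rw [hcover]
  exact union_mem (union_mem h setOf_isSquare_mem) (finite_Iio N).mem_densityZeroIdeal

end densityZeroIdeal

lemma abs_fst_sub_snd_le_two_mul_norm (p : ℝ × ℝ) : |p.1 - p.2| ≤ 2 * ‖p‖ :=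
  calc |p.1 - p.2| ≤ ‖p.1‖ + ‖p.2‖ := abs_sub _ _
    _ ≤ 2 * ‖p‖ := by linarith [norm_fst_le p, norm_snd_le p]

lemma abs_fst_sub_snd_le_two_of_mem_V13 {v : ℝ × ℝ} (hv : v ∈ V13) : |v.1 - v.2| ≤ 2 := by
  rcases hv with hv | hv
  · linarith [abs_fst_sub_snd_le_two_mul_norm v, show ‖v‖ ≤ 1 from hv]
  · simp [show v.1 = v.2 from hv]

lemma abs_fst_sub_snd_lt_of_mem_V13_add_ball {p : ℝ × ℝ} {ε : ℝ}
    (hp : p ∈ V13 + Metric.ball 0 ε) : |p.1 - p.2| < 2 + 2 * ε := by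
  obtain ⟨v, hv, u, hu, rfl⟩ := hp
  rw [mem_ball_zero_iff] at hu
  calc |(v + u).1 - (v + u).2| = |(v.1 - v.2) + (u.1 - u.2)| := by
        congr 1; simp only [Prod.fst_add, Prod.snd_add]; ring
    _ ≤ |v.1 - v.2| + |u.1 - u.2| := abs_add_le _ _
    _ < 2 + 2 * ε := by
      linarith [abs_fst_sub_snd_le_two_of_mem_V13 hv, abs_fst_sub_snd_le_two_mul_norm u]

lemma fst_sub_snd_smul_xSeq13_sub {n : ℕ} (hn : ¬IsSquare n) (xs : ℝ × ℝ) :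
    ((n : ℝ) • (xSeq13 n - xs)).1 - ((n : ℝ) • (xSeq13 n - xs)).2 = n * (1 - (xs.1 - xs.2)) := by
  simp only [xSeq13, if_neg hn, Prod.smul_fst, Prod.smul_snd, Prod.fst_sub, Prod.snd_sub,
    smul_eq_mul]
  ring

lemma setOf_smul_xSeq13_sub_not_mem_subset {xs : ℝ × ℝ} (hxs : xs.1 - xs.2 = 1)
    {U : Set (ℝ × ℝ)} (hU : (0 : ℝ × ℝ) ∈ U) :
    {n : ℕ | (n : ℝ) • (xSeq13 n - xs) ∉ V13 + U} ⊆ {k | IsSquare k} := by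
  intro n hn
  by_contra hsq
  refine hn ⟨_, Or.inr (sub_eq_zero.1 ?_), 0, hU, add_zero _⟩
  rw [fst_sub_snd_smul_xSeq13_sub hsq, hxs, sub_self, mul_zero]

lemma exists_setOf_le_and_not_isSquare_subset {xs : ℝ × ℝ} (hxs : xs.1 - xs.2 ≠ 1) :
    ∃ N : ℕ, {k | N ≤ k ∧ ¬IsSquare k} ⊆
      {n : ℕ | (n : ℝ) • (xSeq13 n - xs) ∉ V13 + Metric.ball 0 1} := by
  have hd : 0 < |1 - (xs.1 - xs.2)| := abs_pos.2 (sub_ne_zero.2 (Ne.symm hxs))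
  obtain ⟨N, hN⟩ := exists_nat_gt (4 / |1 - (xs.1 - xs.2)|)
  refine ⟨N, fun k ⟨hkN, hsq⟩ hk => ?_⟩
  have hlt := abs_fst_sub_snd_lt_of_mem_V13_add_ball hk
  rw [fst_sub_snd_smul_xSeq13_sub hsq, abs_mul, Nat.abs_cast] at hlt
  rw [div_lt_iff₀ hd] at hN
  have : (N : ℝ) ≤ k := by exact_mod_cast hkN
  nlinarith

lemma not_convex_V13 : ¬Convex ℝ V13 := by
  intro h
  have hmid := h (x := (1, 0)) (y := (2, 2)) (Or.inl (by simp [Prod.norm_def])) (Or.inr rfl)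
    (a := 1 / 2) (b := 1 / 2) (by norm_num) (by norm_num) (by norm_num)
  rcases hmid with hball | hdiag
  · have := (norm_fst_le _).trans hball
    norm_num at this
  · norm_num at hdiag

/-- In ℝ² with the max norm and coordinatewise order, with the density-zero
ideal, weights `t n = n` and the sequence and roughness set above, the rough weighted
`I`-τ-limit set equals the line `{(ξ, η) : ξ - η = 1}`; this set is convex although `V13`
is not convex. -/
theorem wLimSet_eq_line_example1 :
    {xs : ℝ × ℝ | ∀ U ∈ 𝓝 (0 : ℝ × ℝ),
        {n : ℕ | (n : ℝ) • (xSeq13 n - xs) ∉ V13 + U} ∈ densityZeroIdeal}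
      = {p : ℝ × ℝ | p.1 - p.2 = 1} ∧
    Convex ℝ {p : ℝ × ℝ | p.1 - p.2 = 1} ∧ ¬ Convex ℝ V13 := by
  refine ⟨?_, convex_hyperplane IsLinearMap.isLinearMap_sub 1, not_convex_V13⟩
  ext xs
  refine ⟨fun h => ?_, fun hxs U hU => ?_⟩
  · by_contra hxs
    obtain ⟨N, hN⟩ := exists_setOf_le_and_not_isSquare_subset hxs
    exact densityZeroIdeal.setOf_le_and_not_isSquare_not_mem N
      (densityZeroIdeal.mono hN (h _ (Metric.ball_mem_nhds 0 one_pos)))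
  · exact densityZeroIdeal.mono (setOf_smul_xSeq13_sub_not_mem_subset hxs (mem_of_mem_nhds hU))
      densityZeroIdeal.setOf_isSquare_mem
end

section
/- Work in ℝ² with the Euclidean norm, coordinatewise order, and the norm topology, and let I_s = {A ⊆ ℕ : Σ_{a∈A} 1/a < ∞} be the summability ideal. Define t_n = n for all n ≥ 1, x_n = ((−1)ⁿ, 0) if n is not a perfect power (i.e., n ≠ m^p for all m ∈ ℕ and integers p ≥ 2) and x_n = (n, 0) otherwise, and V = {(ξ,η) ∈ ℝ² : −1 < η < 1}. Then the rough weighted I_τ-limit set of x with degree of roughness V equals the line {(ξ,η) ∈ ℝ² : η = 0}; in particular it is infinite and not von Neumann bounded. -/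
open Topology Filter Set Pointwise

/-- The summability ideal `{A ⊆ ℕ : Σ_{a ∈ A} 1/a < ∞}`. -/
def summabilityIdeal : Set (Set ℕ) :=
  {A | Summable fun a : A => (1 : ℝ) / (a : ℝ)}

open Classical in
/-- The sequence of Example 3: `x n = (n, 0)` if `n` is a perfect power (`n = m ^ p` with
`p ≥ 2`), and `x n = ((-1) ^ n, 0)` otherwise. -/
noncomputable def xSeq14 : ℕ → ℝ × ℝ := fun n =>
  if ∃ m p : ℕ, 2 ≤ p ∧ n = m ^ p then ((n : ℝ), 0) else ((-1 : ℝ) ^ n, 0)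

/-- The degree of roughness of Example 3: the open horizontal strip `{(ξ, η) : -1 < η < 1}`. -/
def V14 : Set (ℝ × ℝ) := {p | -1 < p.2 ∧ p.2 < 1}

/-!
Every term of `x` lies on the horizontal axis, so `n • (x n - ξ)` has second coordinate
`-n ξ₂`. For `ξ₂ = 0` this vector lies in `V`, and the exceptional sets are empty. For `ξ₂ ≠ 0`
it leaves the strip `V + ball 0 1 ⊆ {|η| < 2}` as soon as `n ≥ 2 / |ξ₂|`, so an exceptional set
contains a tail of `ℕ`, which carries a divergent harmonic series. The line is unbounded, since it
projects onto `ℝ`, while a von Neumann bounded set lies in a dilate of the unit ball.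
-/

lemma mem_summabilityIdeal_iff {A : Set ℕ} :
    A ∈ summabilityIdeal ↔ Summable (A.indicator fun n : ℕ => (1 : ℝ) / n) :=
  summable_subtype_iff_indicator (f := fun n : ℕ => (1 : ℝ) / n)

lemma summabilityIdeal_mono {A B : Set ℕ} (hAB : A ⊆ B) (hB : B ∈ summabilityIdeal) :
    A ∈ summabilityIdeal := by
  rw [mem_summabilityIdeal_iff] at hB ⊢
  have hnonneg (n : ℕ) : 0 ≤ (1 : ℝ) / n := by positivity
  exact hB.of_nonneg_of_le (indicator_nonneg fun n _ => hnonneg n)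
    (indicator_le_indicator_of_subset hAB hnonneg)

lemma Ici_notMem_summabilityIdeal (N : ℕ) : Ici N ∉ summabilityIdeal := by
  have htail : (Ici N).indicator (fun n : ℕ => (1 : ℝ) / n) =ᶠ[cofinite] fun n => 1 / n := by
    rw [Nat.cofinite_eq_atTop]
    filter_upwards [eventually_ge_atTop N] with n hn using indicator_of_mem hn _
  rw [mem_summabilityIdeal_iff, summable_congr_cofinite htail]
  exact Real.not_summable_one_div_natCast

lemma snd_smul_xSeq14_sub (n : ℕ) (xs : ℝ × ℝ) :
    ((n : ℝ) • (xSeq14 n - xs)).2 = -(n * xs.2) := by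
  have hx : (xSeq14 n).2 = 0 := by unfold xSeq14; split_ifs <;> rfl
  simp [hx]

lemma abs_snd_lt_two_of_mem_V14_add_ball {v : ℝ × ℝ} (hv : v ∈ V14 + Metric.ball 0 1) :
    |v.2| < 2 := by
  obtain ⟨w, ⟨hw₁, hw₂⟩, u, hu, rfl⟩ := hv
  have hu₂ : |u.2| < 1 := (norm_snd_le u).trans_lt (mem_ball_zero_iff.mp hu)
  calc |w.2 + u.2| ≤ |w.2| + |u.2| := abs_add_le _ _
    _ < 1 + 1 := add_lt_add (abs_lt.mpr ⟨hw₁, hw₂⟩) hu₂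
    _ = 2 := one_add_one_eq_two

lemma snd_eq_zero_of_mem_summabilityIdeal {xs : ℝ × ℝ}
    (h : {n : ℕ | (n : ℝ) • (xSeq14 n - xs) ∉ V14 + Metric.ball 0 1} ∈ summabilityIdeal) :
    xs.2 = 0 := by
  by_contra hxs
  have hpos : 0 < |xs.2| := abs_pos.mpr hxs
  refine Ici_notMem_summabilityIdeal ⌈2 / |xs.2|⌉₊ (summabilityIdeal_mono (fun n hn => ?_) h)
  intro hmem
  have hn : 2 / |xs.2| ≤ n := Nat.ceil_le.mp hn
  have hlt := abs_snd_lt_two_of_mem_V14_add_ball hmem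
  rw [snd_smul_xSeq14_sub, abs_neg, abs_mul, Nat.abs_cast] at hlt
  rw [div_le_iff₀ hpos] at hn
  linarith

lemma setOf_smul_xSeq14_sub_notMem_eq_empty {xs : ℝ × ℝ} (hxs : xs.2 = 0) {U : Set (ℝ × ℝ)}
    (hU : (0 : ℝ × ℝ) ∈ U) : {n : ℕ | (n : ℝ) • (xSeq14 n - xs) ∉ V14 + U} = ∅ := by
  refine eq_empty_of_forall_notMem fun n hn => hn (subset_add_left V14 hU ?_)
  have h0 : ((n : ℝ) • (xSeq14 n - xs)).2 = 0 := by
    rw [snd_smul_xSeq14_sub, hxs, mul_zero, neg_zero]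
  exact ⟨h0 ▸ neg_one_lt_zero, h0 ▸ zero_lt_one⟩

lemma isBounded_of_forall_nhds_subset_smul {E : Type*} [NormedAddCommGroup E] [NormedSpace ℝ E]
    {S : Set E} (h : ∀ U ∈ 𝓝 (0 : E), ∃ lam : ℝ, 0 < lam ∧ S ⊆ lam • U) :
    Bornology.IsBounded S := by
  obtain ⟨lam, hlam, hS⟩ := h _ (Metric.ball_mem_nhds 0 one_pos)
  rw [smul_unitBall_of_pos hlam] at hS
  exact Metric.isBounded_ball.subset hS

lemma not_isBounded_setOf_snd_eq_zero : ¬ Bornology.IsBounded {p : ℝ × ℝ | p.2 = 0} := by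
  intro h
  have hfst : Prod.fst '' {p : ℝ × ℝ | p.2 = 0} = univ :=
    eq_univ_of_forall fun ξ => ⟨(ξ, 0), rfl, rfl⟩
  exact NormedSpace.unbounded_univ ℝ ℝ (hfst ▸ LipschitzWith.prod_fst.isBounded_image h)

/-- In ℝ² with the summability ideal, weights `t n = n` and the sequence and
roughness set above, the rough weighted `I`-τ-limit set equals the line `{(ξ, η) : η = 0}`;
in particular it is infinite and not von Neumann bounded. -/
theorem wLimSet_eq_line_example3 :
    {xs : ℝ × ℝ | ∀ U ∈ 𝓝 (0 : ℝ × ℝ),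
        {n : ℕ | (n : ℝ) • (xSeq14 n - xs) ∉ V14 + U} ∈ summabilityIdeal}
      = {p : ℝ × ℝ | p.2 = 0} ∧
    ({p : ℝ × ℝ | p.2 = 0} : Set (ℝ × ℝ)).Infinite ∧
    ¬ (∀ U ∈ 𝓝 (0 : ℝ × ℝ), ∃ lam : ℝ, 0 < lam ∧ {p : ℝ × ℝ | p.2 = 0} ⊆ lam • U) := by
  refine ⟨?_, fun hfin => not_isBounded_setOf_snd_eq_zero hfin.isBounded,
    fun h => not_isBounded_setOf_snd_eq_zero (isBounded_of_forall_nhds_subset_smul h)⟩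
  ext xs
  refine ⟨fun h => snd_eq_zero_of_mem_summabilityIdeal (h _ (Metric.ball_mem_nhds 0 one_pos)),
    fun hxs U hU => ?_⟩
  rw [setOf_smul_xSeq14_sub_notMem_eq_empty hxs (mem_of_mem_nhds hU)]
  exact summable_empty
end

section
/- Work in ℝ² with the Euclidean norm, coordinatewise order, and the norm topology, and let I_s = {A ⊆ ℕ : Σ_{a∈A} 1/a < ∞} be the summability ideal. Define t_n = n for all n ≥ 1, x_n = (1, −2/n) if n is not a perfect square and x_n = (n, −n) if n is a perfect square, and V = {(ξ,η) ∈ ℝ² : −1 < ξ < 1 and η ≥ −1}. Then the rough weighted I_τ-limit set of x with degree of roughness V equals {(ξ,η) ∈ ℝ² : ξ = 1 and η < 0}; in particular this set is neither closed nor open in ℝ². -/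
open Topology Filter Set Pointwise

/-- The sequence of Example 5: `x n = (n, -n)` if `n` is a perfect square and
`x n = (1, -2/n)` otherwise. -/
noncomputable def xSeq15 : ℕ → ℝ × ℝ := fun n =>
  if IsSquare n then ((n : ℝ), -(n : ℝ)) else (1, -(2 / (n : ℝ)))

/-- The degree of roughness of Example 5. -/
def V15 : Set (ℝ × ℝ) := {p | -1 < p.1 ∧ p.1 < 1 ∧ -1 ≤ p.2}

lemma union_mem_summabilityIdeal {A B : Set ℕ} (hA : A ∈ summabilityIdeal)
    (hB : B ∈ summabilityIdeal) : A ∪ B ∈ summabilityIdeal := by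
  rw [mem_summabilityIdeal_iff] at *
  refine (hA.add hB).of_nonneg_of_le (indicator_nonneg fun _ _ => by positivity) fun n => ?_
  rw [← indicator_union_add_inter_apply]
  exact le_add_of_nonneg_right (indicator_nonneg (fun _ _ => by positivity) n)

lemma Set.Finite.mem_summabilityIdeal {A : Set ℕ} (hA : A.Finite) : A ∈ summabilityIdeal :=
  have := hA.to_subtype
  Summable.of_finite

lemma setOf_isSquare_mem_summabilityIdeal : {n : ℕ | IsSquare n} ∈ summabilityIdeal := by
  rw [mem_summabilityIdeal_iff]
  have hinj : Function.Injective fun k : ℕ => k * k := fun _ _ => Nat.mul_self_inj.mp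
  have hoff : ∀ n ∉ range fun k : ℕ => k * k,
      {n : ℕ | IsSquare n}.indicator (fun n => (1 : ℝ) / n) n = 0 :=
    fun n hn => indicator_of_notMem (by rintro ⟨k, rfl⟩; exact hn ⟨k, rfl⟩) _
  refine (hinj.summable_iff hoff).mp ?_
  refine (Real.summable_one_div_nat_pow.mpr one_lt_two).congr fun k => ?_
  simp [sq]

lemma univ_notMem_summabilityIdeal : univ ∉ summabilityIdeal := by
  rw [mem_summabilityIdeal_iff, indicator_univ]
  exact Real.not_summable_one_div_natCast

def summabilityFilter : Filter ℕ :=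
  comk (· ∈ summabilityIdeal) finite_empty.mem_summabilityIdeal
    (fun _ ht _ hst => summabilityIdeal_mono hst ht)
    (fun _ hs _ ht => union_mem_summabilityIdeal hs ht)

lemma setOf_not_mem_summabilityIdeal_iff_eventually {p : ℕ → Prop} :
    {n | ¬p n} ∈ summabilityIdeal ↔ ∀ᶠ n in summabilityFilter, p n := by
  rw [summabilityFilter, Filter.Eventually, mem_comk, compl_ofPred]

instance : summabilityFilter.NeBot :=
  ⟨fun h => univ_notMem_summabilityIdeal <| by
    simpa [summabilityFilter] using empty_mem_iff_bot.mpr h⟩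

lemma summabilityFilter_le_cofinite : summabilityFilter ≤ cofinite :=
  fun _ hs => (mem_cofinite.mp hs).mem_summabilityIdeal

lemma tendsto_natCast_summabilityFilter :
    Tendsto (Nat.cast : ℕ → ℝ) summabilityFilter atTop :=
  tendsto_natCast_atTop_atTop.mono_left (Nat.cofinite_eq_atTop ▸ summabilityFilter_le_cofinite)

lemma eventually_not_isSquare_summabilityFilter : ∀ᶠ n in summabilityFilter, ¬IsSquare n :=
  setOf_not_mem_summabilityIdeal_iff_eventually.mp <| by
    simpa using setOf_isSquare_mem_summabilityIdeal

lemma smul_xSeq15_sub_of_not_isSquare {n : ℕ} (hn : ¬IsSquare n) (ξ η : ℝ) :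
    (n : ℝ) • (xSeq15 n - (ξ, η)) = (n * (1 - ξ), -2 - n * η) := by
  have hn0 : (n : ℝ) ≠ 0 := Nat.cast_ne_zero.mpr fun h => hn (h ▸ ⟨0, rfl⟩)
  simp only [xSeq15, hn, if_false, Prod.mk_sub_mk, Prod.smul_mk, smul_eq_mul,
    Prod.mk.injEq, true_and]
  field_simp

lemma V15_add_subset : V15 + Ioo (-1) 1 ×ˢ Ioi (-1 / 2) ⊆ Ioo (-2) 2 ×ˢ Ioi (-3 / 2) := by
  rintro _ ⟨v, ⟨hv₁, hv₁', hv₂⟩, u, ⟨⟨hu₁, hu₁'⟩, hu₂⟩, rfl⟩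
  simp only [mem_prod, mem_Ioo, mem_Ioi, Prod.fst_add, Prod.snd_add] at hu₂ ⊢
  exact ⟨⟨by linarith, by linarith⟩, by linarith⟩

lemma eq_one_and_neg_of_eventually_smul_xSeq15_sub_mem {ξ η : ℝ}
    (h : ∀ U ∈ 𝓝 (0 : ℝ × ℝ),
      ∀ᶠ n : ℕ in summabilityFilter, (n : ℝ) • (xSeq15 n - (ξ, η)) ∈ V15 + U) :
    ξ = 1 ∧ η < 0 := by
  have hU : Ioo (-1 : ℝ) 1 ×ˢ Ioi (-1 / 2 : ℝ) ∈ 𝓝 (0 : ℝ × ℝ) :=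
    prod_mem_nhds (Ioo_mem_nhds (by norm_num) (by norm_num)) (Ioi_mem_nhds (by norm_num))
  obtain ⟨n, hsq, hn, hmem⟩ := (eventually_not_isSquare_summabilityFilter.and <|
    (tendsto_natCast_summabilityFilter.eventually_ge_atTop (2 / |1 - ξ|)).and (h _ hU)).exists
  have hbound := V15_add_subset hmem
  rw [smul_xSeq15_sub_of_not_isSquare hsq] at hbound
  obtain ⟨⟨h₁, h₁'⟩, h₂⟩ := hbound
  constructor
  · by_contra hξ
    have hpos : 0 < |1 - ξ| := abs_pos.mpr (sub_ne_zero.mpr (Ne.symm hξ))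
    have hlarge : 2 ≤ |(n : ℝ) * (1 - ξ)| := by
      rw [abs_mul, Nat.abs_cast]
      exact (div_le_iff₀ hpos).mp hn
    linarith [abs_lt.mpr ⟨h₁, h₁'⟩]
  · by_contra! hη
    simp only [mem_Ioi] at h₂
    linarith [mul_nonneg n.cast_nonneg hη]

lemma eventually_smul_xSeq15_sub_mem_V15 {η : ℝ} (hη : η < 0) :
    ∀ᶠ n : ℕ in summabilityFilter, (n : ℝ) • (xSeq15 n - (1, η)) ∈ V15 := by
  filter_upwards [eventually_not_isSquare_summabilityFilter,
    tendsto_natCast_summabilityFilter.eventually_ge_atTop (1 / -η)] with n hsq hn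
  have hlarge : 1 ≤ (n : ℝ) * -η := (div_le_iff₀ (neg_pos.mpr hη)).mp hn
  rw [smul_xSeq15_sub_of_not_isSquare hsq]
  exact ⟨by simp, by simp, by linarith⟩

lemma not_isClosed_singleton_prod_Iio {X Y : Type*} [TopologicalSpace X] [TopologicalSpace Y]
    [LinearOrder Y] [OrderTopology Y] [DenselyOrdered Y] [NoMinOrder Y] (a : X) (b : Y) :
    ¬IsClosed ({a} ×ˢ Iio b) := fun h => by
  have hab : (a, b) ∈ closure ({a} ×ˢ Iio b) := by
    rw [closure_prod_eq, closure_Iio]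
    exact ⟨subset_closure rfl, le_rfl⟩
  exact lt_irrefl b (h.closure_eq ▸ hab).2

lemma not_isOpen_singleton_prod {X Y : Type*} [TopologicalSpace X] [TopologicalSpace Y]
    (a : X) [(𝓝[≠] a).NeBot] {t : Set Y} (ht : t.Nonempty) : ¬IsOpen ({a} ×ˢ t) := by
  rw [isOpen_prod_iff']
  rintro (⟨ha, -⟩ | ha | ht')
  · exact not_isOpen_singleton a ha
  · exact singleton_ne_empty a ha
  · exact ht.ne_empty ht'

/-- In ℝ² with the summability ideal, weights `t n = n` and the sequence and
roughness set above, the rough weighted `I`-τ-limit set equals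
`{(ξ, η) : ξ = 1 ∧ η < 0}`; in particular this set is neither closed nor open. -/
theorem wLimSet_not_closed_example5 :
    {xs : ℝ × ℝ | ∀ U ∈ 𝓝 (0 : ℝ × ℝ),
        {n : ℕ | (n : ℝ) • (xSeq15 n - xs) ∉ V15 + U} ∈ summabilityIdeal}
      = {p : ℝ × ℝ | p.1 = 1 ∧ p.2 < 0} ∧
    ¬ IsClosed ({p : ℝ × ℝ | p.1 = 1 ∧ p.2 < 0} : Set (ℝ × ℝ)) ∧
    ¬ IsOpen ({p : ℝ × ℝ | p.1 = 1 ∧ p.2 < 0} : Set (ℝ × ℝ)) := by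
  refine ⟨?_, not_isClosed_singleton_prod_Iio (1 : ℝ) (0 : ℝ),
    not_isOpen_singleton_prod (1 : ℝ) nonempty_Iio⟩
  ext ⟨ξ, η⟩
  simp only [mem_ofPred_eq, setOf_not_mem_summabilityIdeal_iff_eventually]
  refine ⟨eq_one_and_neg_of_eventually_smul_xSeq15_sub_mem, ?_⟩
  rintro ⟨rfl, hη⟩ U hU
  exact (eventually_smul_xSeq15_sub_mem_V15 hη).mono fun n hn =>
    subset_add_left V15 (mem_of_mem_nhds hU) hn
end
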